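/- arXiv:1408.2248 — 11 statements merged into one kernel-verified Lean document; each statement's English description precedes it below -/
import Mathlib

section
/- For all x > 0, (sinh x)/x < (2 + cosh x)/3. -/
/-!
Clearing denominators, the claim is `0 < x (2 + cosh x) - 3 sinh x`. Its derivative is
`2 - 2 cosh x + x sinh x`, whose derivative is `x cosh x - sinh x`, whose derivative is
`x sinh x > 0`. All three functions vanish at `0`, so each is positive on `(0, ∞)` by the
mean value theorem, one after the other.
-/

lemma pos_of_hasDerivAt_of_deriv_pos {f f' : ℝ → ℝ} (hf : ∀ y, HasDerivAt f (f' y) y)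
    (hf0 : f 0 = 0) (hf' : ∀ y, 0 < y → 0 < f' y) {x : ℝ} (hx : 0 < x) : 0 < f x := by
  obtain ⟨c, hc, hslope⟩ := exists_hasDerivAt_eq_slope f f' hx
    (fun y _ => (hf y).continuousAt.continuousWithinAt) (fun y _ => hf y)
  have : 0 < (f x - f 0) / (x - 0) := hslope ▸ hf' c hc.1
  rwa [hf0, sub_zero, sub_zero, div_pos_iff_of_pos_right hx] at this

namespace Real

lemma sinh_lt_mul_cosh {x : ℝ} (hx : 0 < x) : sinh x < x * cosh x := by
  have hderiv (y : ℝ) : HasDerivAt (fun y => y * cosh y - sinh y) (y * sinh y) y :=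
    (((hasDerivAt_id' y).mul (hasDerivAt_cosh y)).sub (hasDerivAt_sinh y)).congr_deriv
      (by ring)
  have := pos_of_hasDerivAt_of_deriv_pos hderiv (by simp)
    (fun y hy => mul_pos hy (sinh_pos_iff.mpr hy)) hx
  linarith

lemma two_mul_cosh_lt {x : ℝ} (hx : 0 < x) : 2 * cosh x < 2 + x * sinh x := by
  have hderiv (y : ℝ) :
      HasDerivAt (fun y => 2 - 2 * cosh y + y * sinh y) (y * cosh y - sinh y) y :=
    ((((hasDerivAt_cosh y).const_mul 2).const_sub 2).add
      ((hasDerivAt_id' y).mul (hasDerivAt_sinh y))).congr_deriv (by ring)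
  have := pos_of_hasDerivAt_of_deriv_pos hderiv (by simp)
    (fun y hy => sub_pos.mpr (sinh_lt_mul_cosh hy)) hx
  linarith

lemma three_mul_sinh_lt {x : ℝ} (hx : 0 < x) : 3 * sinh x < x * (2 + cosh x) := by
  have hderiv (y : ℝ) :
      HasDerivAt (fun y => y * (2 + cosh y) - 3 * sinh y) (2 - 2 * cosh y + y * sinh y) y :=
    (((hasDerivAt_id' y).mul ((hasDerivAt_cosh y).const_add 2)).sub
      ((hasDerivAt_sinh y).const_mul 3)).congr_deriv (by ring)
  have := pos_of_hasDerivAt_of_deriv_pos hderiv (by simp)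
    (fun y hy => by linarith [two_mul_cosh_lt hy]) hx
  linarith

end Real

theorem stmt_1 (x : ℝ) (hx : 0 < x) :
    Real.sinh x / x < (2 + Real.cosh x) / 3 := by
  rw [div_lt_div_iff₀ hx three_pos]
  linarith [Real.three_mul_sinh_lt hx]
end

section
/- For all x > 0, (sinh x)/x > (cosh(x/√5))^{5/3}. -/
/-!
Cubing, the claim becomes `x³ cosh⁵ u < sinh³ x` with `u = x / √5`. Multiplied by 16 and
linearised (`16 sinh³ x = 4 sinh 3x - 12 sinh x`, `16 cosh⁵ u = cosh 5u + 5 cosh 3u + 10 cosh u`),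
both sides are power series in `x` with terms in `x^(2n+3)`. Because `u² = x² / 5`, the
coefficients agree for `n ≤ 2` and those of `sinh³` dominate from then on, strictly at `n = 3`.
-/

open Real Nat

lemma cube_mul_five_pow_le_nine_pow {n : ℕ} (hn : 9 ≤ n) :
    (2 * n + 3) ^ 3 * 5 ^ n ≤ 48 * 9 ^ n := by
  induction n, hn using Nat.le_induction with
  | base => norm_num
  | succ n hn ih =>
    have hstep : (2 * (n + 1) + 3) ^ 3 * 5 ≤ 9 * (2 * n + 3) ^ 3 := by
      obtain ⟨m, rfl⟩ := Nat.exists_eq_add_of_le hn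
      nlinarith [Nat.zero_le (m ^ 3), Nat.zero_le (m ^ 2)]
    calc (2 * (n + 1) + 3) ^ 3 * 5 ^ (n + 1) = (2 * (n + 1) + 3) ^ 3 * 5 * 5 ^ n := by ring
      _ ≤ 9 * (2 * n + 3) ^ 3 * 5 ^ n := Nat.mul_le_mul_right _ hstep
      _ ≤ 9 * (48 * 9 ^ n) := by rw [mul_assoc]; exact Nat.mul_le_mul_left _ ih
      _ = 48 * 9 ^ (n + 1) := by ring

lemma five_mul_nine_pow_add_ten_le {n : ℕ} (hn : 3 ≤ n) : 5 * 9 ^ n + 10 ≤ 25 ^ n := by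
  induction n, hn using Nat.le_induction with
  | base => norm_num
  | succ n hn ih => rw [pow_succ, pow_succ]; omega

lemma cosh_pow_five_coeff_le_sinh_cube_coeff_nat (n : ℕ) :
    (2 * n + 1) * (2 * n + 2) * (2 * n + 3) * (25 ^ n + 5 * 9 ^ n + 10) + 12 * 5 ^ n
      ≤ 108 * 45 ^ n := by
  rcases Nat.lt_or_ge n 9 with hn | hn
  · interval_cases n <;> norm_num
  have hcube : (2 * n + 1) * (2 * n + 2) * (2 * n + 3) ≤ (2 * n + 3) ^ 3 := by nlinarith
  have hsum : 25 ^ n + 5 * 9 ^ n + 10 ≤ 2 * 25 ^ n := by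
    have := five_mul_nine_pow_add_ten_le (n := n) (by omega); omega
  have h5 : 5 ^ n ≤ 45 ^ n := Nat.pow_le_pow_left (by norm_num) n
  calc (2 * n + 1) * (2 * n + 2) * (2 * n + 3) * (25 ^ n + 5 * 9 ^ n + 10) + 12 * 5 ^ n
      ≤ (2 * n + 3) ^ 3 * (2 * 25 ^ n) + 12 * 45 ^ n := by
        have := Nat.mul_le_mul hcube hsum; omega
    _ = 2 * ((2 * n + 3) ^ 3 * 5 ^ n) * 5 ^ n + 12 * 45 ^ n := by
        rw [show 25 ^ n = 5 ^ n * 5 ^ n by rw [← Nat.mul_pow]]; ring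
    _ ≤ 2 * (48 * 9 ^ n) * 5 ^ n + 12 * 45 ^ n := by
        have := cube_mul_five_pow_le_nine_pow hn; gcongr
    _ = 108 * 45 ^ n := by rw [show 45 = 9 * 5 by rfl, Nat.mul_pow]; ring

lemma cosh_pow_five (t : ℝ) :
    16 * cosh t ^ 5 = cosh (5 * t) + 5 * cosh (3 * t) + 10 * cosh t := by
  rw [show 5 * t = t + t + t + t + t by ring, show 3 * t = t + t + t by ring]
  simp only [cosh_eq, exp_add, exp_neg]
  field_simp
  ring

lemma cosh_pow_five_coeff_le_sinh_cube_coeff (n : ℕ) :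
    ((25 : ℝ) ^ n + 5 * 9 ^ n + 10) / (5 ^ n * (2 * n)!)
      ≤ (4 * 3 ^ (2 * n + 3) - 12) / (2 * n + 3)! := by
  have hfac : ((2 * n + 3)! : ℝ) = (2 * n + 1) * (2 * n + 2) * (2 * n + 3) * (2 * n)! := by
    simp only [show 2 * n + 3 = 2 * n + 2 + 1 by rfl, Nat.factorial_succ]; push_cast; ring
  have h := (Nat.cast_le (α := ℝ)).2 (cosh_pow_five_coeff_le_sinh_cube_coeff_nat n)
  push_cast at h
  rw [div_le_div_iff₀ (by positivity) (by positivity), hfac,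
    show (4 : ℝ) * 3 ^ (2 * n + 3) = 108 * 9 ^ n by rw [pow_add, pow_mul]; norm_num; ring,
    show (45 : ℝ) ^ n = 9 ^ n * 5 ^ n by rw [← mul_pow]; norm_num] at *
  have := (2 * n)!.factorial_pos
  nlinarith

lemma hasSum_sinh_cube (x : ℝ) :
    HasSum (fun n : ℕ ↦ (4 * 3 ^ (2 * n + 3) - 12) / (2 * n + 3)! * x ^ (2 * n + 3))
      (16 * sinh x ^ 3) := by
  have h := ((hasSum_sinh (3 * x)).mul_left 4).sub ((hasSum_sinh x).mul_left 12)
  have hterm : (fun n : ℕ ↦ (4 * 3 ^ (2 * n + 3) - 12) / (2 * n + 3)! * x ^ (2 * n + 3)) =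
      fun n ↦ 4 * ((3 * x) ^ (2 * (n + 1) + 1) / (2 * (n + 1) + 1)!) -
        12 * (x ^ (2 * (n + 1) + 1) / (2 * (n + 1) + 1)!) := by
    funext n
    rw [show 2 * (n + 1) + 1 = 2 * n + 3 by ring, mul_pow]
    ring
  have hsum : 16 * sinh x ^ 3 = 4 * sinh (3 * x) - 12 * sinh x -
      ∑ i ∈ Finset.range 1, (4 * ((3 * x) ^ (2 * i + 1) / (2 * i + 1)!) -
        12 * (x ^ (2 * i + 1) / (2 * i + 1)!)) := by
    simp only [sinh_three_mul, Finset.range_one, Finset.sum_singleton, mul_zero, zero_add,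
      pow_one, factorial_one, cast_one, div_one]
    ring
  rw [hterm, hsum]
  exact (hasSum_nat_add_iff' 1).mpr h

lemma hasSum_cosh_pow_five (u : ℝ) :
    HasSum (fun n : ℕ ↦ ((25 : ℝ) ^ n + 5 * 9 ^ n + 10) / (2 * n)! * u ^ (2 * n))
      (16 * cosh u ^ 5) := by
  rw [cosh_pow_five]
  convert ((hasSum_cosh (5 * u)).add ((hasSum_cosh (3 * u)).mul_left 5)).add
    ((hasSum_cosh u).mul_left 10) using 1
  funext n
  rw [mul_pow, mul_pow, pow_mul (5 : ℝ), pow_mul (3 : ℝ)]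
  ring

lemma cube_mul_cosh_pow_five_lt_sinh_cube {x : ℝ} (hx : 0 < x) :
    x ^ 3 * cosh (x / √5) ^ 5 < sinh x ^ 3 := by
  have hterm (n : ℕ) :
      x ^ 3 * (((25 : ℝ) ^ n + 5 * 9 ^ n + 10) / (2 * n)! * (x / √5) ^ (2 * n))
        = x ^ (2 * n + 3) * (((25 : ℝ) ^ n + 5 * 9 ^ n + 10) / (5 ^ n * (2 * n)!)) := by
    rw [div_pow, pow_mul, pow_mul, sq_sqrt (by norm_num : (0 : ℝ) ≤ 5)]
    field_simp
    ring
  have hlt := hasSum_lt (i := 3) (fun n ↦ ?_) ?_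
    ((hasSum_cosh_pow_five (x / √5)).mul_left (x ^ 3)) (hasSum_sinh_cube x)
  · linarith
  · rw [hterm, mul_comm (_ / _)]
    exact mul_le_mul_of_nonneg_left (cosh_pow_five_coeff_le_sinh_cube_coeff n) (by positivity)
  · rw [hterm, mul_comm (_ / _)]
    exact mul_lt_mul_of_pos_left (by norm_num [Nat.factorial]) (by positivity)

theorem stmt_2 (x : ℝ) (hx : 0 < x) :
    Real.sinh x / x > (Real.cosh (x / Real.sqrt 5)) ^ ((5 : ℝ) / 3) := by
  have hcosh := cosh_pos (x / √5)
  refine lt_of_pow_lt_pow_left₀ 3 (div_pos (sinh_pos_iff.2 hx) hx).le ?_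
  rw [← rpow_natCast, ← rpow_mul hcosh.le, div_pow, lt_div_iff₀ (by positivity)]
  norm_num
  linarith [cube_mul_cosh_pow_five_lt_sinh_cube hx]
end

section
/- For all x > 0, (sinh x)/x < (cosh(x/3))^{3}. -/
/-!
With `t = x / 3` the claim reads `sinh (3t) < 3t cosh³ t`. The difference
`3t cosh³ t - sinh (3t)` vanishes at `0`, and by the triplication formula
`cosh (3t) = 4 cosh³ t - 3 cosh t` its derivative is `9 cosh t sinh t (t cosh t - sinh t)`,
which is positive for `t > 0` because `tanh t < t`.
-/

open Real Set

lemma pos_of_hasDerivAt_pos {f f' : ℝ → ℝ} (hf : ∀ y, HasDerivAt f (f' y) y) (h0 : f 0 = 0)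
    (hf' : ∀ y, 0 < y → 0 < f' y) {x : ℝ} (hx : 0 < x) : 0 < f x := by
  have hmono : StrictMonoOn f (Ici 0) :=
    strictMonoOn_of_deriv_pos (convex_Ici 0) (fun y _ ↦ (hf y).continuousAt.continuousWithinAt)
      fun y hy ↦ by
        rw [interior_Ici] at hy
        rw [(hf y).deriv]
        exact hf' y hy
  simpa [h0] using hmono self_mem_Ici hx.le hx

lemma Real.sinh_lt_mul_cosh_s3 {t : ℝ} (ht : 0 < t) : sinh t < t * cosh t := by
  have hderiv (y : ℝ) : HasDerivAt (fun t ↦ t * cosh t - sinh t) (y * sinh y) y := by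
    refine (((hasDerivAt_id y).mul (hasDerivAt_cosh y)).sub (hasDerivAt_sinh y)).congr_deriv ?_
    simp only [id]
    ring
  have hpos := pos_of_hasDerivAt_pos hderiv (by simp)
    (fun y hy ↦ mul_pos hy (sinh_pos_iff.2 hy)) ht
  linarith

lemma Real.sinh_three_mul_lt_mul_cosh_pow {t : ℝ} (ht : 0 < t) : sinh (3 * t) < 3 * t * cosh t ^ 3 := by
  have hderiv (y : ℝ) : HasDerivAt (fun t ↦ 3 * t * cosh t ^ 3 - sinh (3 * t))
      (9 * cosh y * sinh y * (y * cosh y - sinh y)) y := by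
    have hlin : HasDerivAt (fun t : ℝ ↦ 3 * t) 3 y := by
      simpa using (hasDerivAt_id y).const_mul 3
    refine ((hlin.mul ((hasDerivAt_cosh y).fun_pow 3)).sub
      ((hasDerivAt_sinh (3 * y)).comp y hlin)).congr_deriv ?_
    rw [cosh_three_mul]
    linear_combination (-9 * cosh y) * cosh_sq' y
  have hpos := pos_of_hasDerivAt_pos hderiv (by simp) (fun y hy ↦
    mul_pos (mul_pos (mul_pos (by norm_num) (cosh_pos y)) (sinh_pos_iff.2 hy))
      (sub_pos.2 (sinh_lt_mul_cosh_s3 hy))) ht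
  linarith

theorem stmt_3 (x : ℝ) (hx : 0 < x) :
    Real.sinh x / x < (Real.cosh (x / 3)) ^ (3 : ℝ) := by
  have h := sinh_three_mul_lt_mul_cosh_pow (div_pos hx three_pos)
  rw [mul_div_cancel₀ x three_ne_zero] at h
  rw [rpow_ofNat, div_lt_iff₀ hx]
  linarith
end

section
/- The power series coefficients of A(x) = (sinh x − x cosh x)² cosh x are given by A(x) = Σ_{n≥3} a_n x^{2n} / (4(2n)!) with a_n = (4n² − 14n + 9)·9^{n−1} + 12n² − 10n − 1, and a_n > 0 for all n ≥ 3. -/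
theorem key4A (x : ℝ) : 4 * ((Real.sinh x - x * Real.cosh x) ^ 2 * Real.cosh x) =
    x^2 * Real.cosh (3*x) + 3 * x^2 * Real.cosh x - 2*x*Real.sinh (3*x)
      - 2*x*Real.sinh x + Real.cosh (3*x) - Real.cosh x := by
  have h3 : Real.exp (3 * x) = Real.exp x ^ 3 := by
    rw [show (3:ℝ) = (3:ℕ) by norm_num, Real.exp_nat_mul]
  have e2 : Real.exp (-(3*x)) = (Real.exp x)⁻¹ ^ 3 := by
    rw [Real.exp_neg, h3, inv_pow]
  simp only [Real.cosh_eq, Real.sinh_eq, h3, e2, Real.exp_neg x]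
  have hx := (Real.exp_pos x).ne'
  field_simp
  ring


theorem stmt_8 :
    (∀ x : ℝ, (Real.sinh x - x * Real.cosh x) ^ 2 * Real.cosh x =
      ∑' n : ℕ, (((4 * ((n : ℝ) + 3) ^ 2 - 14 * ((n : ℝ) + 3) + 9) * 9 ^ ((n : ℕ) + 3 - 1)
        + 12 * ((n : ℝ) + 3) ^ 2 - 10 * ((n : ℝ) + 3) - 1)
        * x ^ (2 * (n + 3)) / (4 * Nat.factorial (2 * (n + 3))))) ∧
    (∀ n : ℕ, 3 ≤ n →
      0 < (4 * (n : ℝ) ^ 2 - 14 * n + 9) * 9 ^ (n - 1) + 12 * (n : ℝ) ^ 2 - 10 * n - 1) := by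
  constructor
  · intro x
    have h1 := ((Real.hasSum_cosh (3*x)).mul_left (x^2))
    have h2 := ((Real.hasSum_cosh x).mul_left (3*x^2))
    have h3 := ((Real.hasSum_sinh (3*x)).mul_left (-2*x))
    have h4 := ((Real.hasSum_sinh x).mul_left (-2*x))
    have h5 := (Real.hasSum_cosh (3*x)).sub (Real.hasSum_cosh x)
    have h1' := (hasSum_nat_add_iff' 2).2 h1
    have h2' := (hasSum_nat_add_iff' 2).2 h2
    have h3' := (hasSum_nat_add_iff' 2).2 h3
    have h4' := (hasSum_nat_add_iff' 2).2 h4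
    have h5' := (hasSum_nat_add_iff' 3).2 h5
    have H := ((((h1'.add h2').add h3').add h4').add h5').div_const 4
    have hfun : ∀ n : ℕ, (((4 * ((n : ℝ) + 3) ^ 2 - 14 * ((n : ℝ) + 3) + 9) * 9 ^ ((n : ℕ) + 3 - 1)
          + 12 * ((n : ℝ) + 3) ^ 2 - 10 * ((n : ℝ) + 3) - 1)
          * x ^ (2 * (n + 3)) / (4 * Nat.factorial (2 * (n + 3)))) =
        (x ^ 2 * ((3*x) ^ (2 * (n+2)) / (2 * (n+2)).factorial) +
          3 * x ^ 2 * (x ^ (2 * (n+2)) / (2 * (n+2)).factorial) +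
          -2 * x * ((3*x) ^ (2 * (n+2) + 1) / (2 * (n+2) + 1).factorial) +
          -2 * x * (x ^ (2 * (n+2) + 1) / (2 * (n+2) + 1).factorial) +
          ((3*x) ^ (2 * (n+3)) / (2 * (n+3)).factorial -
            x ^ (2 * (n+3)) / (2 * (n+3)).factorial)) / 4 := by
      intro n
      have e1 : 2 * (n+2) = 2*n+4 := by ring
      have e2 : 2 * (n+2) + 1 = 2*n+5 := by ring
      have e3 : 2 * (n+3) = 2*n+6 := by ring
      have e4 : (n:ℕ) + 3 - 1 = n + 2 := rfl
      have f5 : ((2*n+5).factorial : ℝ) = (2*n+5) * (2*n+4).factorial := by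
        rw [show 2*n+5 = (2*n+4)+1 from rfl, Nat.factorial_succ]; push_cast; ring
      have f6 : ((2*n+6).factorial : ℝ) = (2*n+6) * ((2*n+5) * (2*n+4).factorial) := by
        rw [show 2*n+6 = (2*n+5)+1 from rfl, Nat.factorial_succ]; push_cast; rw [f5]; ring
      have p1 : ((3:ℝ)*x) ^ (2*n+4) = 9 ^ (n+2) * x ^ (2*n+4) := by
        rw [mul_pow, show 2*n+4 = 2*(n+2) by ring, pow_mul]; norm_num
      have p2 : ((3:ℝ)*x) ^ (2*n+5) = 3 * 9 ^ (n+2) * x ^ (2*n+5) := by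
        rw [mul_pow, show 2*n+5 = 2*(n+2)+1 by ring, pow_succ, pow_mul]; ring_nf
      have p3 : ((3:ℝ)*x) ^ (2*n+6) = 9 * 9 ^ (n+2) * x ^ (2*n+6) := by
        rw [mul_pow, show 2*n+6 = 2*(n+2)+2 by ring, pow_add, pow_mul]; ring_nf
      have hq : ((2*n+4).factorial : ℝ) ≠ 0 := by positivity
      rw [e2, e1, e3, e4, f6, p1, p2, p3, f5]
      have hx6 : x ^ (2*n+6) = x ^ (2*n+4) * x^2 := by rw [← pow_add]
      have hx5 : x ^ (2*n+5) = x ^ (2*n+4) * x := pow_succ x (2*n+4)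
      rw [hx6, hx5]
      field_simp
      ring
    rw [tsum_congr hfun]
    rw [H.tsum_eq]
    have k := key4A x
    simp only [Finset.sum_range_succ, Finset.sum_range_zero]
    norm_num [Nat.factorial]
    nlinarith [k]
  · intro n hn
    have hn' : (3:ℝ) ≤ (n:ℝ) := by exact_mod_cast hn
    have h9 : (1:ℝ) ≤ 9 ^ (n-1) := one_le_pow₀ (by norm_num)
    have hc : (0:ℝ) ≤ 4*(n:ℝ)^2 - 14*n + 9 := by nlinarith
    have hm := mul_le_mul_of_nonneg_left h9 hc
    nlinarith [hm]
end

section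
/- For every integer n ≥ 3, the quantity w_n = 9^{3n+2} − (1024n⁴ − 2560n³ + 2752n² + 243)·9^{2n} + (1024n⁴ + 2560n³ + 2752n² + 243)·9^{n} − 81 is strictly positive. -/
/-!
With `x = 9 ^ n`, the quantity is `x ^ 2 * (81 * x - p) + (q * x - 81)`, where `p` and `q` are the
two quartics. The second summand is nonnegative since `q ≥ 243` and `x ≥ 1`; the first is positive
because `p(n) < 81 * 9 ^ n` for `n ≥ 3`, which follows by induction from `p(n + 1) ≤ 9 * p(n)`.
-/

lemma cubic_pos_of_lt {x p q : ℝ} (hx : 1 ≤ x) (hp : p < 81 * x) (hq : 81 ≤ q) :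
    0 < 81 * x ^ 3 - p * x ^ 2 + q * x - 81 := by
  have hlead : 0 < x ^ 2 * (81 * x - p) := by
    have : 0 < x := by linarith
    positivity
  have htail : 0 ≤ q * x - 81 := by nlinarith
  linarith

lemma quartic_succ_le_nine_mul (n : ℝ) (hn : 3 ≤ n) :
    1024 * (n + 1) ^ 4 - 2560 * (n + 1) ^ 3 + 2752 * (n + 1) ^ 2 + 243
      ≤ 9 * (1024 * n ^ 4 - 2560 * n ^ 3 + 2752 * n ^ 2 + 243) := by
  nlinarith [mul_nonneg (sq_nonneg n) (sq_nonneg (2 * n - 3)), sq_nonneg (n - 3)]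

lemma quartic_lt_eighty_one_mul_nine_pow (n : ℕ) (hn : 3 ≤ n) :
    1024 * (n : ℝ) ^ 4 - 2560 * n ^ 3 + 2752 * n ^ 2 + 243 < 81 * 9 ^ n := by
  induction n, hn using Nat.le_induction with
  | base => norm_num
  | succ n hn ih =>
    have hstep := quartic_succ_le_nine_mul n (by exact_mod_cast hn)
    push_cast
    rw [pow_succ (9 : ℝ) n]
    linarith

theorem stmt_10 (n : ℕ) (hn : 3 ≤ n) :
    0 < (9 : ℝ) ^ (3 * n + 2)
      - (1024 * (n : ℝ) ^ 4 - 2560 * n ^ 3 + 2752 * n ^ 2 + 243) * 9 ^ (2 * n)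
      + (1024 * (n : ℝ) ^ 4 + 2560 * n ^ 3 + 2752 * n ^ 2 + 243) * 9 ^ n - 81 := by
  have hpow₃ : (9 : ℝ) ^ (3 * n + 2) = 81 * (9 ^ n) ^ 3 := by ring
  have hpow₂ : (9 : ℝ) ^ (2 * n) = (9 ^ n) ^ 2 := by ring
  rw [hpow₃, hpow₂]
  refine cubic_pos_of_lt (one_le_pow₀ (by norm_num)) (quartic_lt_eighty_one_mul_nine_pow n hn) ?_
  have : (0 : ℝ) ≤ 1024 * (n : ℝ) ^ 4 + 2560 * n ^ 3 + 2752 * n ^ 2 := by positivity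
  linarith
end

section
/- For all x > 0, ln((sinh x)/x) > (1/3) ln(cosh x); equivalently (sinh x)/x > (cosh x)^{1/3}. -/
/-!
Put `t = (cosh x)^{1/3}`. The function `u = sinh / cosh^{1/3} - id` vanishes at `0`, and
`3 t⁴ u' = 2 t⁶ + 1 - 3 t⁴`, which is positive for `t > 1` by AM–GM applied to `t⁶, t⁶, 1`.
Hence `u > 0` on `(0, ∞)`, i.e. `(cosh x)^{1/3} < sinh x / x`; now take logarithms.
-/

open Real Set

-- `2 a³ + 1 - 3 a² = (a - 1)² (2 a + 1)`
lemma three_mul_sq_lt_two_mul_pow_three_add_one {a : ℝ} (ha₀ : 0 ≤ a) (ha₁ : a ≠ 1) :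
    3 * a ^ 2 < 2 * a ^ 3 + 1 := by
  nlinarith [sq_pos_of_ne_zero (sub_ne_zero.2 ha₁)]

lemma hasDerivAt_sinh_div_cosh_rpow_one_third (x : ℝ) :
    HasDerivAt (fun y => sinh y / cosh y ^ (1 / 3 : ℝ))
      ((cosh x * cosh x ^ (1 / 3 : ℝ) - sinh x * (sinh x * (1 / 3) * cosh x ^ (1 / 3 - 1 : ℝ)))
        / (cosh x ^ (1 / 3 : ℝ)) ^ 2) x :=
  (hasDerivAt_sinh x).div ((hasDerivAt_cosh x).rpow_const (Or.inl (cosh_pos x).ne'))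
    (rpow_pos_of_pos (cosh_pos x) _).ne'

lemma one_lt_deriv_sinh_div_cosh_rpow_one_third {x : ℝ} (hx : x ≠ 0) :
    1 < (cosh x * cosh x ^ (1 / 3 : ℝ) - sinh x * (sinh x * (1 / 3) * cosh x ^ (1 / 3 - 1 : ℝ)))
        / (cosh x ^ (1 / 3 : ℝ)) ^ 2 := by
  set t := cosh x ^ (1 / 3 : ℝ) with ht
  have hc : cosh x = t ^ 3 := by
    rw [ht, ← rpow_natCast, ← rpow_mul (cosh_pos x).le]; norm_num
  have ht₁ : 1 < t := one_lt_rpow (one_lt_cosh.2 hx) (by norm_num)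
  have hs : sinh x ^ 2 = t ^ 6 - 1 := by
    rw [sinh_sq, hc]; ring
  rw [rpow_sub_one (cosh_pos x).ne', ← ht, one_lt_div (by positivity), hc]
  have key := three_mul_sq_lt_two_mul_pow_three_add_one (a := t ^ 2) (by positivity)
    (by nlinarith)
  field_simp
  rw [hs]
  linarith

lemma strictMonoOn_sinh_div_cosh_rpow_one_third_sub_id :
    StrictMonoOn (fun y => sinh y / cosh y ^ (1 / 3 : ℝ) - y) (Ici 0) := by
  have hderiv (x : ℝ) : HasDerivAt (fun y => sinh y / cosh y ^ (1 / 3 : ℝ) - y) _ x :=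
    (hasDerivAt_sinh_div_cosh_rpow_one_third x).sub (hasDerivAt_id' x)
  refine strictMonoOn_of_deriv_pos (convex_Ici 0)
    (continuous_iff_continuousAt.2 fun x => (hderiv x).continuousAt).continuousOn fun x hx => ?_
  rw [interior_Ici] at hx
  rw [(hderiv x).deriv, sub_pos]
  exact one_lt_deriv_sinh_div_cosh_rpow_one_third hx.ne'

theorem cosh_rpow_one_third_lt_sinh_div {x : ℝ} (hx : 0 < x) :
    cosh x ^ (1 / 3 : ℝ) < sinh x / x := by
  have h := strictMonoOn_sinh_div_cosh_rpow_one_third_sub_id self_mem_Ici hx.le hx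
  simp only [sinh_zero, zero_div, sub_zero, sub_pos] at h
  rwa [lt_div_iff₀ (rpow_pos_of_pos (cosh_pos x) _), mul_comm, ← lt_div_iff₀ hx] at h

theorem stmt_11 (x : ℝ) (hx : 0 < x) :
    Real.log (Real.sinh x / x) > (1 / 3) * Real.log (Real.cosh x) := by
  rw [← log_rpow (cosh_pos x)]
  exact log_lt_log (rpow_pos_of_pos (cosh_pos x) _) (cosh_rpow_one_third_lt_sinh_div hx)
end

section
/- For all x > 0 and all q ≤ 0 with q ≠ 0, ln((sinh x)/x) > (1/3)·(cosh^q x − 1)/q. -/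
open Real Set

private lemma pos_of_deriv (f f' : ℝ → ℝ) (h0 : f 0 = 0)
    (hc : ContinuousOn f (Ici 0))
    (hd : ∀ y ∈ Ioi (0:ℝ), HasDerivAt f (f' y) y)
    (hp : ∀ y ∈ Ioi (0:ℝ), 0 < f' y) :
    ∀ y, 0 < y → 0 < f y := by
  intro y hy
  have hm : StrictMonoOn f (Ici 0) := by
    apply strictMonoOn_of_deriv_pos (convex_Ici 0) hc
    intro z hz
    rw [interior_Ici] at hz
    rw [(hd z hz).deriv]
    exact hp z hz
  have := hm (self_mem_Ici) (le_of_lt hy : (0:ℝ) ≤ y) hy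
  rwa [h0] at this

private lemma L1 : ∀ y, 0 < y → 0 < y * Real.cosh y - Real.sinh y := by
  apply pos_of_deriv _ (fun y => y * Real.sinh y)
  · simp
  · fun_prop
  · intro y _
    have h1 : HasDerivAt (fun y : ℝ => y * Real.cosh y) (Real.cosh y + y * Real.sinh y) y := by
      exact ((hasDerivAt_id' y).mul (Real.hasDerivAt_cosh y)).congr_deriv (by ring)
    exact (h1.sub (Real.hasDerivAt_sinh y)).congr_deriv (by ring)
  · intro y hy
    exact mul_pos hy (Real.sinh_pos_iff.2 hy)

private lemma L2 : ∀ y, 0 < y → 0 < 2 - 2 * Real.cosh y + y * Real.sinh y := by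
  apply pos_of_deriv _ (fun y => y * Real.cosh y - Real.sinh y)
  · simp
  · fun_prop
  · intro y _
    have h1 : HasDerivAt (fun y : ℝ => y * Real.sinh y) (Real.sinh y + y * Real.cosh y) y := by
      exact ((hasDerivAt_id' y).mul (Real.hasDerivAt_sinh y)).congr_deriv (by ring)
    have h2 := ((hasDerivAt_const y (2:ℝ)).sub ((Real.hasDerivAt_cosh y).const_mul 2)).add h1
    refine h2.congr_deriv ?_
    ring
  · intro y hy
    exact L1 y hy

private lemma L3 : ∀ y, 0 < y → 0 < 2 * y + y * Real.cosh y - 3 * Real.sinh y := by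
  apply pos_of_deriv _ (fun y => 2 - 2 * Real.cosh y + y * Real.sinh y)
  · simp
  · fun_prop
  · intro y _
    have h1 : HasDerivAt (fun y : ℝ => y * Real.cosh y) (Real.cosh y + y * Real.sinh y) y := by
      exact ((hasDerivAt_id' y).mul (Real.hasDerivAt_cosh y)).congr_deriv (by ring)
    have h2 := (((hasDerivAt_id y).const_mul 2).add h1).sub ((Real.hasDerivAt_sinh y).const_mul 3)
    refine h2.congr_deriv ?_
    ring
  · intro y hy
    exact L2 y hy

/-- numerator positivity for the log-derivative -/
private lemma Lnum (x : ℝ) (hx : 0 < x) :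
    0 < 3 * x * Real.cosh x ^ 2 - 3 * Real.sinh x * Real.cosh x - x * Real.sinh x ^ 2 := by
  have h3 := L3 (2 * x) (by linarith)
  have hc := Real.cosh_two_mul x
  have hs := Real.sinh_two_mul x
  have hsq := Real.cosh_sq x
  nlinarith [h3, hc, hs, hsq]

/-- Lazarević: `3 log(sinh x / x) ≥ log cosh x` for `x > 0`. -/
private lemma lazarevic (x : ℝ) (hx : 0 < x) :
    Real.log (Real.cosh x) ≤ 3 * Real.log (Real.sinh x / x) := by
  set h : ℝ → ℝ := fun x => 3 * Real.log (Real.sinh x / x) - Real.log (Real.cosh x) with hh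
  -- derivative facts
  have hderiv : ∀ z ∈ Ioi (0:ℝ), HasDerivAt h
      (3 * (((Real.cosh z * z - Real.sinh z) / z ^ 2) / (Real.sinh z / z))
        - Real.sinh z / Real.cosh z) z := by
    intro z hz
    have hz0 : (0:ℝ) < z := hz
    have hs0 : 0 < Real.sinh z := Real.sinh_pos_iff.2 hz0
    have hq : HasDerivAt (fun z : ℝ => Real.sinh z / z)
        ((Real.cosh z * z - Real.sinh z * 1) / z ^ 2) z :=
      (Real.hasDerivAt_sinh z).div (hasDerivAt_id z) hz0.ne'
    have hlog1 : HasDerivAt (fun z : ℝ => Real.log (Real.sinh z / z))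
        (((Real.cosh z * z - Real.sinh z * 1) / z ^ 2) / (Real.sinh z / z)) z :=
      hq.log (by positivity)
    have hlog2 : HasDerivAt (fun z : ℝ => Real.log (Real.cosh z))
        (Real.sinh z / Real.cosh z) z :=
      (Real.hasDerivAt_cosh z).log (Real.cosh_pos z).ne'
    exact ((hlog1.const_mul 3).sub hlog2).congr_deriv (by simp [mul_one])
  have hmono : StrictMonoOn h (Ioi 0) := by
    apply strictMonoOn_of_deriv_pos (convex_Ioi 0)
    · intro z hz
      exact ((hderiv z hz).continuousAt).continuousWithinAt
    · intro z hz
      rw [interior_Ioi] at hz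
      rw [(hderiv z hz).deriv]
      have hz0 : (0:ℝ) < z := hz
      have hs0 : 0 < Real.sinh z := Real.sinh_pos_iff.2 hz0
      have hc0 : 0 < Real.cosh z := Real.cosh_pos z
      have hn := Lnum z hz0
      have e : 3 * (((Real.cosh z * z - Real.sinh z) / z ^ 2) / (Real.sinh z / z))
          = (3 * z * Real.cosh z - 3 * Real.sinh z) / (z * Real.sinh z) := by
        field_simp
      rw [sub_pos, e, div_lt_div_iff₀ hc0 (by positivity)]
      nlinarith [hn]
  -- limit at 0
  have hlim : Filter.Tendsto h (nhdsWithin 0 (Ioi 0)) (nhds 0) := by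
    have hslope : Filter.Tendsto (fun z : ℝ => Real.sinh z / z) (nhdsWithin 0 {0}ᶜ)
        (nhds 1) := by
      have := (Real.hasDerivAt_sinh 0)
      rw [hasDerivAt_iff_tendsto_slope] at this
      rw [Real.cosh_zero] at this
      exact this.congr (fun z => by simp [slope_def_field])
    have hslope' : Filter.Tendsto (fun z : ℝ => Real.sinh z / z) (nhdsWithin 0 (Ioi 0))
        (nhds 1) := hslope.mono_left (nhdsWithin_mono 0 (fun z hz => ne_of_gt hz))
    have h1 : Filter.Tendsto (fun z : ℝ => Real.log (Real.sinh z / z))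
        (nhdsWithin 0 (Ioi 0)) (nhds 0) := by
      have := (Real.continuousAt_log one_ne_zero).tendsto.comp hslope'
      simpa [Function.comp_def] using this
    have h2 : Filter.Tendsto (fun z : ℝ => Real.log (Real.cosh z))
        (nhdsWithin 0 (Ioi 0)) (nhds 0) := by
      have : ContinuousAt (fun z : ℝ => Real.log (Real.cosh z)) 0 :=
        Real.continuous_cosh.continuousAt.log (by simp)
      simpa [Real.cosh_zero] using this.continuousWithinAt.tendsto
    simpa using (h1.const_mul 3).sub h2
  -- conclude h x ≥ 0
  have hx0 : 0 ≤ h x := by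
    apply le_of_tendsto hlim
    filter_upwards [Ioo_mem_nhdsGT_of_mem (by exact ⟨le_refl 0, hx⟩ : (0:ℝ) ∈ Ico 0 x)]
      with t ht
    exact le_of_lt (hmono ht.1 hx ht.2)
  simp only [hh] at hx0
  linarith

theorem stmt_12 (x q : ℝ) (hx : 0 < x) (hq : q < 0) :
    Real.log (Real.sinh x / x) > (1 / 3) * ((Real.cosh x ^ q - 1) / q) := by
  have hc1 : 1 < Real.cosh x := Real.one_lt_cosh.2 hx.ne'
  have hlc : 0 < Real.log (Real.cosh x) := Real.log_pos hc1
  -- step A: (cosh^q - 1)/q < log cosh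
  have hA : (Real.cosh x ^ q - 1) / q < Real.log (Real.cosh x) := by
    have hrpow : Real.cosh x ^ q = Real.exp (q * Real.log (Real.cosh x)) :=
      by rw [Real.rpow_def_of_pos (by linarith) q, mul_comm]
    have hexp : q * Real.log (Real.cosh x) + 1 < Real.exp (q * Real.log (Real.cosh x)) :=
      Real.add_one_lt_exp (by nlinarith)
    rw [div_lt_iff_of_neg hq]
    nlinarith
  have hB := lazarevic x hx
  linarith
end

section
/- For all x > 0, (sinh x)/x > (8/15 + (7/15)·cosh x)^{5/7}. -/
open Nat Real

private lemma fact_seven (k : ℕ) : (k+7)! =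
    (k+1)*(k+2)*(k+3)*(k+4)*(k+5)*(k+6)*(k+7) * k ! := by
  show Nat.factorial (k+7) = _
  rw [Nat.factorial_succ, Nat.factorial_succ, Nat.factorial_succ, Nat.factorial_succ,
    Nat.factorial_succ, Nat.factorial_succ, Nat.factorial_succ]
  ring

private lemma keyNat (m : ℕ) :
    4 * ((2*m+1)*(2*m+2)*(2*m+3)*(2*m+4)*(2*m+5)*(2*m+6)*(2*m+7)) *
      (3107568*0^(2*m) + 5096070*1^(2*m) + 2775360*2^(2*m) + 962115*3^(2*m)
        + 192080*4^(2*m) + 16807*5^(2*m))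
      + 759375*(7*5^(2*m+7) + 35)
    ≤ 759375*(7^(2*m+7) + 21*3^(2*m+7)) := by
  rcases lt_or_ge m 9 with hm | hm
  · interval_cases m <;> norm_num
  · induction m, hm using Nat.le_induction with
    | base => norm_num
    | succ m hm ih =>
      -- abbreviations
      have hA : (3107568*0^(2*(m+1)) + 5096070*1^(2*(m+1)) + 2775360*2^(2*(m+1))
            + 962115*3^(2*(m+1)) + 192080*4^(2*(m+1)) + 16807*5^(2*(m+1)))
          ≤ 25 * (3107568*0^(2*m) + 5096070*1^(2*m) + 2775360*2^(2*m) + 962115*3^(2*m)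
            + 192080*4^(2*m) + 16807*5^(2*m)) := by
        have e0 : (0:ℕ)^(2*(m+1)) = 0^(2*m) * 0^2 := by
          rw [show 2*(m+1) = 2*m+2 by ring, pow_add]
        have e1 : (1:ℕ)^(2*(m+1)) = 1^(2*m) * 1^2 := by
          rw [show 2*(m+1) = 2*m+2 by ring, pow_add]
        have e2 : (2:ℕ)^(2*(m+1)) = 2^(2*m) * 2^2 := by
          rw [show 2*(m+1) = 2*m+2 by ring, pow_add]
        have e3 : (3:ℕ)^(2*(m+1)) = 3^(2*m) * 3^2 := by
          rw [show 2*(m+1) = 2*m+2 by ring, pow_add]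
        have e4 : (4:ℕ)^(2*(m+1)) = 4^(2*m) * 4^2 := by
          rw [show 2*(m+1) = 2*m+2 by ring, pow_add]
        have e5 : (5:ℕ)^(2*(m+1)) = 5^(2*m) * 5^2 := by
          rw [show 2*(m+1) = 2*m+2 by ring, pow_add]
        rw [e0, e1, e2, e3, e4, e5]
        have h0 : (0:ℕ) ≤ 0^(2*m) := Nat.zero_le _
        have h1 : (0:ℕ) ≤ 1^(2*m) := Nat.zero_le _
        have h2 : (0:ℕ) ≤ 2^(2*m) := Nat.zero_le _
        have h3 : (0:ℕ) ≤ 3^(2*m) := Nat.zero_le _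
        have h4 : (0:ℕ) ≤ 4^(2*m) := Nat.zero_le _
        nlinarith [h0, h1, h2, h3, h4]
      set A := 3107568*0^(2*m) + 5096070*1^(2*m) + 2775360*2^(2*m) + 962115*3^(2*m)
            + 192080*4^(2*m) + 16807*5^(2*m) with hAdef
      set A' := 3107568*0^(2*(m+1)) + 5096070*1^(2*(m+1)) + 2775360*2^(2*(m+1))
            + 962115*3^(2*(m+1)) + 192080*4^(2*(m+1)) + 16807*5^(2*(m+1)) with hA'def
      set Pr := (2*m+1)*(2*m+2)*(2*m+3)*(2*m+4)*(2*m+5)*(2*m+6)*(2*m+7) with hPrdef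
      set Pr' := (2*(m+1)+1)*(2*(m+1)+2)*(2*(m+1)+3)*(2*(m+1)+4)*(2*(m+1)+5)*(2*(m+1)+6)*(2*(m+1)+7)
        with hPr'def
      -- 4 * Pr' * A' ≤ 49 * (4 * Pr * A)
      have hPA : 4 * Pr' * A' ≤ 49 * (4 * Pr * A) := by
        have hcancel : (2*m+1)*(2*m+2) * (4 * Pr' * A') ≤ (2*m+1)*(2*m+2) * (49 * (4 * Pr * A)) := by
          calc (2*m+1)*(2*m+2) * (4 * Pr' * A')
              = (4 * ((2*m+8)*(2*m+9)) * Pr) * A' := by rw [hPr'def, hPrdef]; ring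
            _ ≤ (4 * ((2*m+8)*(2*m+9)) * Pr) * (25 * A) :=
                Nat.mul_le_mul_left _ hA
            _ = (25*((2*m+8)*(2*m+9))) * (4 * Pr * A) := by ring
            _ ≤ (49*((2*m+1)*(2*m+2))) * (4 * Pr * A) := by
                have : 25*((2*m+8)*(2*m+9)) ≤ 49*((2*m+1)*(2*m+2)) := by nlinarith
                exact Nat.mul_le_mul_right _ this
            _ = (2*m+1)*(2*m+2) * (49 * (4 * Pr * A)) := by ring
        exact Nat.le_of_mul_le_mul_left hcancel (by positivity)
      -- 5 * 3^(2m+7) ≤ 5^(2m+7)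
      have h53 : 5 * 3^(2*m+7) ≤ 5^(2*m+7) := by
        calc 5 * 3^(2*m+7) = 405 * 3^(2*m+3) := by rw [show 2*m+7 = (2*m+3)+4 by ring, pow_add]; ring
          _ ≤ 405 * 5^(2*m+3) :=
              Nat.mul_le_mul_left _ (Nat.pow_le_pow_left (by norm_num) _)
          _ ≤ 625 * 5^(2*m+3) := Nat.mul_le_mul_right _ (by norm_num)
          _ = 5^(2*m+7) := by rw [show 2*m+7 = (2*m+3)+4 by ring, pow_add]; ring
      have h49 : 49 * (4 * Pr * A) + 49*(759375*(7*5^(2*m+7) + 35))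
          ≤ 49*(759375*(7^(2*m+7) + 21*3^(2*m+7))) := by
        have := Nat.mul_le_mul_left 49 ih
        linarith
      have e7 : (7:ℕ)^(2*(m+1)+7) = 49 * 7^(2*m+7) := by
        rw [show 2*(m+1)+7 = (2*m+7)+2 by ring, pow_add]; ring
      have e5' : (5:ℕ)^(2*(m+1)+7) = 25 * 5^(2*m+7) := by
        rw [show 2*(m+1)+7 = (2*m+7)+2 by ring, pow_add]; ring
      have e3' : (3:ℕ)^(2*(m+1)+7) = 9 * 3^(2*m+7) := by
        rw [show 2*(m+1)+7 = (2*m+7)+2 by ring, pow_add]; ring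
      rw [e7, e5', e3']
      linarith [hPA, h49, h53]

private lemma keyNat3 :
    4 * ((2*3+1)*(2*3+2)*(2*3+3)*(2*3+4)*(2*3+5)*(2*3+6)*(2*3+7)) *
      (3107568*0^(2*3) + 5096070*1^(2*3) + 2775360*2^(2*3) + 962115*3^(2*3)
        + 192080*4^(2*3) + 16807*5^(2*3))
      + 759375*(7*5^(2*3+7) + 35)
    < 759375*(7^(2*3+7) + 21*3^(2*3+7)) := by norm_num


private noncomputable def Lf (x : ℝ) (n : ℕ) : ℝ :=
  (759375/64) * ((7^(2*n+1) - 7*5^(2*n+1) + 21*3^(2*n+1) - 35) / ((2*n+1)! : ℝ)) * x^(2*n+1)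

private noncomputable def cf (x : ℝ) (n : ℕ) : ℝ :=
  (1/16) * ((3107568*(0:ℝ)^(2*n) + 5096070*1^(2*n) + 2775360*2^(2*n) + 962115*3^(2*n)
    + 192080*4^(2*n) + 16807*5^(2*n)) / ((2*n)! : ℝ)) * x^(2*n+7)

private noncomputable def Rf (x : ℝ) (n : ℕ) : ℝ := if n < 3 then 0 else cf x (n-3)

private lemma hasSum_Lf (x : ℝ) : HasSum (Lf x) (759375 * Real.sinh x ^ 7) := by
  have id1 : Real.sinh (7*x) - 7*Real.sinh (5*x) + 21*Real.sinh (3*x) - 35*Real.sinh x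
      = 64 * Real.sinh x ^ 7 := by
    simp only [Real.sinh_eq]
    rw [show (7:ℝ)*x = x+x+x+x+x+x+x by ring, show (5:ℝ)*x = x+x+x+x+x by ring,
      show (3:ℝ)*x = x+x+x by ring]
    simp only [neg_add, Real.exp_add, Real.exp_neg]
    have h := Real.exp_ne_zero x
    field_simp
    ring
  have comb := ((((Real.hasSum_sinh (7*x)).sub ((Real.hasSum_sinh (5*x)).mul_left 7)).add
      ((Real.hasSum_sinh (3*x)).mul_left 21)).sub
      ((Real.hasSum_sinh x).mul_left 35)).mul_left (759375/64)
  have hfun : (fun n : ℕ => (759375/64 : ℝ) *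
      (((7*x)^(2*n+1)/((2*n+1)! : ℝ) - 7*((5*x)^(2*n+1)/((2*n+1)! : ℝ))
        + 21*((3*x)^(2*n+1)/((2*n+1)! : ℝ))) - 35*(x^(2*n+1)/((2*n+1)! : ℝ)))) = Lf x := by
    funext n
    simp only [Lf, mul_pow]
    ring
  have hsum : (759375/64 : ℝ) *
      (Real.sinh (7*x) - 7*Real.sinh (5*x) + 21*Real.sinh (3*x) - 35*Real.sinh x)
      = 759375 * Real.sinh x ^ 7 := by rw [id1]; ring
  rw [← hfun, ← hsum]
  exact comb

private lemma hasSum_Rf (x : ℝ) : HasSum (Rf x) (x^7 * (8 + 7*Real.cosh x)^5) := by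
  have id2 : 16 * (8 + 7*Real.cosh x)^5
      = 3107568*Real.cosh (0*x) + 5096070*Real.cosh (1*x) + 2775360*Real.cosh (2*x)
        + 962115*Real.cosh (3*x) + 192080*Real.cosh (4*x) + 16807*Real.cosh (5*x) := by
    simp only [Real.cosh_eq]
    rw [show (0:ℝ)*x = 0 by ring, show (1:ℝ)*x = x by ring, show (5:ℝ)*x = x+x+x+x+x by ring,
      show (4:ℝ)*x = x+x+x+x by ring, show (3:ℝ)*x = x+x+x by ring, show (2:ℝ)*x = x+x by ring]
    simp only [neg_add, Real.exp_add, Real.exp_neg, neg_zero, Real.exp_zero]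
    have h := Real.exp_ne_zero x
    field_simp
    ring
  have comb := ((((((Real.hasSum_cosh ((0:ℝ)*x)).mul_left 3107568).add
      ((Real.hasSum_cosh ((1:ℝ)*x)).mul_left 5096070)).add
      ((Real.hasSum_cosh ((2:ℝ)*x)).mul_left 2775360)).add
      ((Real.hasSum_cosh ((3:ℝ)*x)).mul_left 962115)).add
      ((Real.hasSum_cosh ((4:ℝ)*x)).mul_left 192080)).add
      ((Real.hasSum_cosh ((5:ℝ)*x)).mul_left 16807) |>.mul_left (x^7/16)
  have hfun : (fun n : ℕ => (x^7/16 : ℝ) *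
      (3107568*((0*x)^(2*n)/((2*n)! : ℝ)) + 5096070*((1*x)^(2*n)/((2*n)! : ℝ))
        + 2775360*((2*x)^(2*n)/((2*n)! : ℝ)) + 962115*((3*x)^(2*n)/((2*n)! : ℝ))
        + 192080*((4*x)^(2*n)/((2*n)! : ℝ)) + 16807*((5*x)^(2*n)/((2*n)! : ℝ)))) = cf x := by
    funext n
    simp only [cf, mul_pow]
    ring
  have hsum : (x^7/16 : ℝ) *
      (3107568*Real.cosh (0*x) + 5096070*Real.cosh (1*x) + 2775360*Real.cosh (2*x)
        + 962115*Real.cosh (3*x) + 192080*Real.cosh (4*x) + 16807*Real.cosh (5*x))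
      = x^7 * (8 + 7*Real.cosh x)^5 := by rw [← id2]; ring
  have hcf : HasSum (cf x) (x^7 * (8 + 7*Real.cosh x)^5) := by
    rw [← hfun, ← hsum]; exact comb
  have hshift : (fun n : ℕ => Rf x (n+3)) = cf x := by
    funext n
    simp only [Rf]
    rw [if_neg (by omega), Nat.add_sub_cancel]
  have h := (hasSum_nat_add_iff (f := Rf x) 3).mp (by rw [hshift]; exact hcf)
  have hz : ∑ i ∈ Finset.range 3, Rf x i = 0 := by
    simp [Finset.sum_range_succ, Rf]
  rwa [hz, add_zero] at h

private lemma Rf_le_Lf (x : ℝ) (hx : 0 < x) (n : ℕ) : Rf x n ≤ Lf x n := by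
  match n with
  | 0 => simp only [Rf, cf, Lf]; norm_num
  | 1 => simp only [Rf, cf, Lf]; norm_num
  | 2 => simp only [Rf, cf, Lf]; norm_num
  | (m+3) =>
    have hmain : cf x m ≤ Lf x (m+3) := by
      simp only [Rf, cf, Lf]
      rw [show 2*(m+3)+1 = 2*m+7 by ring]
      have hfact : ((2*m+7)! : ℝ)
          = ((2*m+1)*(2*m+2)*(2*m+3)*(2*m+4)*(2*m+5)*(2*m+6)*(2*m+7) : ℝ) * ((2*m)! : ℝ) := by
        exact_mod_cast congrArg (Nat.cast (R := ℝ)) (fact_seven (2*m))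
      rw [hfact, show 2*m+7 = 2*m+7 from rfl]
      apply mul_le_mul_of_nonneg_right _ (pow_nonneg hx.le _)
      set P : ℝ := (2*m+1)*(2*m+2)*(2*m+3)*(2*m+4)*(2*m+5)*(2*m+6)*(2*m+7) with hP
      set F : ℝ := ((2*m)! : ℝ) with hF
      set A : ℝ := 3107568*(0:ℝ)^(2*m) + 5096070*1^(2*m) + 2775360*2^(2*m) + 962115*3^(2*m)
        + 192080*4^(2*m) + 16807*5^(2*m) with hA
      have hFpos : (0:ℝ) < F := by
        rw [hF]; exact_mod_cast Nat.factorial_pos _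
      have hPpos : (0:ℝ) < P := by rw [hP]; positivity
      have hk : (4 * ((2*m+1)*(2*m+2)*(2*m+3)*(2*m+4)*(2*m+5)*(2*m+6)*(2*m+7)) *
          (3107568*(0:ℝ)^(2*m) + 5096070*1^(2*m) + 2775360*2^(2*m) + 962115*3^(2*m)
            + 192080*4^(2*m) + 16807*5^(2*m))
          + 759375*(7*5^(2*m+7) + 35) : ℝ)
          ≤ 759375*((7:ℝ)^(2*m+7) + 21*3^(2*m+7)) := by
        exact_mod_cast keyNat m
      rw [← hP, ← hA] at hk
      have h2 : 4 * (P * A) ≤ 759375 *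
          ((7:ℝ)^(2*m+7) - 7*5^(2*m+7) + 21*3^(2*m+7) - 35) := by linarith
      rw [← sub_nonneg]
      have hid : (759375/64 : ℝ) *
            (((7:ℝ)^(2*m+7) - 7*5^(2*m+7) + 21*3^(2*m+7) - 35) / (P*F)) - (1/16)*(A/F)
          = (759375 * ((7:ℝ)^(2*m+7) - 7*5^(2*m+7) + 21*3^(2*m+7) - 35) - 4*(P*A))
            / (64*(P*F)) := by
        have hPne : (P:ℝ) ≠ 0 := hPpos.ne'
        have hFne : (F:ℝ) ≠ 0 := hFpos.ne'
        field_simp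
        ring
      rw [hid]
      exact div_nonneg (by linarith) (by positivity)
    simpa [Rf] using hmain

private lemma Rf_lt_Lf6 (x : ℝ) (hx : 0 < x) : Rf x 6 < Lf x 6 := by
  have h6 : Rf x 6 = cf x 3 := by simp [Rf]
  rw [h6]
  simp only [cf, Lf]
  norm_num [Nat.factorial]
  apply mul_lt_mul_of_pos_right _ (pow_pos hx 13)
  norm_num

theorem stmt_13 (x : ℝ) (hx : 0 < x) :
    Real.sinh x / x > (8 / 15 + (7 / 15) * Real.cosh x) ^ ((5 : ℝ) / 7) := by
  have hmain : x^7 * (8 + 7*Real.cosh x)^5 < 759375 * Real.sinh x ^ 7 :=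
    hasSum_lt (Rf_le_Lf x hx) (Rf_lt_Lf6 x hx) (hasSum_Rf x) (hasSum_Lf x)
  set A : ℝ := 8 / 15 + (7 / 15) * Real.cosh x with hA
  set B : ℝ := Real.sinh x / x with hB
  have hApos : 0 < A := by
    have := Real.cosh_pos (x := x)
    rw [hA]; linarith
  have hBpos : 0 < B := div_pos (Real.sinh_pos_iff.2 hx) hx
  have h57 : A^(5:ℕ) < B^(7:ℕ) := by
    rw [hB, div_pow]
    rw [lt_div_iff₀ (pow_pos hx 7)]
    have e1 : A^(5:ℕ) * x^7 = x^7 * (8 + 7*Real.cosh x)^5 / 759375 := by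
      rw [hA]; ring
    rw [e1]
    rw [div_lt_iff₀ (by norm_num : (0:ℝ) < 759375)]
    linarith [hmain]
  have : A ^ ((5:ℝ)/7) < B := by
    calc A ^ ((5:ℝ)/7) = (A^(5:ℕ)) ^ ((1:ℝ)/7) := by
          rw [← Real.rpow_natCast A 5, ← Real.rpow_mul hApos.le]
          norm_num
      _ < (B^(7:ℕ)) ^ ((1:ℝ)/7) :=
          Real.rpow_lt_rpow (by positivity) h57 (by norm_num)
      _ = B := by
          rw [← Real.rpow_natCast B 7, ← Real.rpow_mul hBpos.le]
          norm_num
  exact this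
end

section
/- For all x > 0, exp((cosh^{8/15}x − 1)·(5/8)) > (sinh x)/x, i.e., (sinh x)/x < exp((5/8)(cosh x)^{8/15} − 5/8). -/
/-!
Put `logGap t = (5/8) (cosh^{8/15} t - 1) - log (sinh t / t)`. It tends to `0` as `t → 0⁺`, and
its derivative is `derivGap t / (3 t sinh t cosh^{7/15} t)` with
`derivGap t = t sinh² t - 3 cosh^{7/15} t (t cosh t - sinh t)`, so it suffices that `derivGap > 0`
on `(0, ∞)`. For `8/15` the first terms of the expansions cancel and `derivGap t ~ (46/1575) t⁷`
at `0`. On `(0, 3/2]` Taylor polynomials of `sinh`, `cosh` and the cubic Taylor bound for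
`(1 + u)^{7/15}` reduce `derivGap > 0` to a polynomial inequality. On each of five subintervals
of `[3/2, 7/2]`, replacing `cosh^{7/15} t` by a constant `K ≥ cosh^{7/15}` of the right endpoint
gives a function that is increasing and positive at the left endpoint. For `t ≥ 7/2`,
`cosh^{8/15} t ≥ 4` and the crude bound `t cosh t - sinh t ≤ t cosh t` suffice.
-/

open Real Set Filter Finset Topology
open scoped Nat

theorem monotoneOn_Icc_of_hasDerivAt {f f' : ℝ → ℝ} {a b : ℝ}
    (hf : ∀ t ∈ Icc a b, HasDerivAt f (f' t) t) (hf' : ∀ t ∈ Ioo a b, 0 ≤ f' t) :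
    MonotoneOn f (Icc a b) :=
  monotoneOn_of_hasDerivWithinAt_nonneg (convex_Icc a b)
    (fun t ht => (hf t ht).continuousAt.continuousWithinAt)
    (fun t ht => by
      rw [interior_Icc] at ht ⊢
      exact (hf t (Ioo_subset_Icc_self ht)).hasDerivWithinAt)
    (fun t ht => hf' t (by rwa [interior_Icc] at ht))

theorem StrictMonoOn.lt_of_tendsto_nhdsGT {f : ℝ → ℝ} {a l x : ℝ}
    (hf : StrictMonoOn f (Ioi a)) (hl : Tendsto f (𝓝[>] a) (𝓝 l)) (hx : a < x) : l < f x := by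
  have hm : (a + x) / 2 ∈ Ioi a := by rw [Set.mem_Ioi]; linarith
  have hlm : l ≤ f ((a + x) / 2) := by
    refine le_of_tendsto hl ?_
    filter_upwards [Ioo_mem_nhdsGT hm] with y hy
    exact (hf hy.1 hm hy.2).le
  exact hlm.trans_lt (hf hm hx (by linarith))

theorem HasSum.le_sum_range_add_mul {a : ℕ → ℝ} {s r : ℝ} (hs : HasSum a s) (n : ℕ)
    (h : ∀ k, a (k + n) ≤ r * a k) : s ≤ ∑ k ∈ range n, a k + r * s := by
  have htail : ∑' k, a (k + n) ≤ r * s := by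
    rw [← hs.tsum_eq, ← tsum_mul_left]
    exact ((summable_nat_add_iff n).2 hs.summable).tsum_le_tsum h (hs.summable.mul_left r)
  linarith [hs.summable.sum_add_tsum_nat_add n, hs.tsum_eq]

namespace Real

noncomputable def coshTaylor (n : ℕ) (x : ℝ) : ℝ := ∑ k ∈ range n, x ^ (2 * k) / (2 * k)!

noncomputable def sinhTaylor (n : ℕ) (x : ℝ) : ℝ :=
  ∑ k ∈ range n, x ^ (2 * k + 1) / (2 * k + 1)!

theorem coshTaylor_le_cosh (n : ℕ) (x : ℝ) : coshTaylor n x ≤ cosh x :=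
  sum_le_hasSum _ (fun k _ => div_nonneg ((even_two_mul k).pow_nonneg x) (by positivity))
    (hasSum_cosh x)

theorem sinhTaylor_nonneg (n : ℕ) {x : ℝ} (hx : 0 ≤ x) : 0 ≤ sinhTaylor n x :=
  sum_nonneg fun k _ => by positivity

theorem sinhTaylor_le_sinh (n : ℕ) {x : ℝ} (hx : 0 ≤ x) : sinhTaylor n x ≤ sinh x :=
  sum_le_hasSum _ (fun k _ => by positivity) (hasSum_sinh x)

/-- `(2 n)! (2 k)! ≤ (2 n + 2 k)!` bounds the tail of the series term by term. -/
theorem cosh_le_coshTaylor_add (n : ℕ) (x : ℝ) :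
    cosh x ≤ coshTaylor n x + x ^ (2 * n) / (2 * n)! * cosh x := by
  refine (hasSum_cosh x).le_sum_range_add_mul n fun k => ?_
  have hfac : ((2 * n)! * (2 * k)! : ℝ) ≤ (2 * (k + n))! := by
    rw [show 2 * (k + n) = 2 * n + 2 * k by ring]
    exact_mod_cast Nat.le_of_dvd (Nat.factorial_pos _)
      (Nat.factorial_mul_factorial_dvd_factorial_add _ _)
  rw [div_mul_div_comm, ← pow_add, show 2 * n + 2 * k = 2 * (k + n) by ring]
  exact div_le_div_of_nonneg_left ((even_two_mul _).pow_nonneg x) (by positivity) hfac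

theorem cosh_le_coshTaylor_div {n : ℕ} {x : ℝ} (hx : x ^ (2 * n) / (2 * n)! < 1) :
    cosh x ≤ coshTaylor n x / (1 - x ^ (2 * n) / (2 * n)!) := by
  rw [le_div_iff₀ (by linarith)]
  linarith [cosh_le_coshTaylor_add n x]

theorem sinh_le_mul_cosh {x : ℝ} (hx : 0 ≤ x) : sinh x ≤ x * cosh x := by
  have hmono := monotoneOn_Icc_of_hasDerivAt (a := 0) (b := x)
    (f := fun t => t * cosh t - sinh t) (f' := fun t => t * sinh t)
    (fun t _ =>
      (((hasDerivAt_id' t).mul (hasDerivAt_cosh t)).sub (hasDerivAt_sinh t)).congr_deriv (by ring))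
    (fun t ht => mul_nonneg ht.1.le (sinh_nonneg_iff.2 ht.1.le))
  simpa only [zero_mul, sinh_zero, sub_self, sub_nonneg] using
    hmono (left_mem_Icc.2 hx) (right_mem_Icc.2 hx) hx

theorem rpow_natCast_div_le_iff {x y : ℝ} (hx : 0 ≤ x) (hy : 0 ≤ y) {m n : ℕ}
    (hn : n ≠ 0) : x ^ ((m : ℝ) / n) ≤ y ↔ x ^ m ≤ y ^ n := by
  rw [← pow_le_pow_iff_left₀ (rpow_nonneg hx _) hy hn, ← rpow_natCast (x ^ _),
    ← rpow_mul hx, div_mul_cancel₀ _ (by exact_mod_cast hn), rpow_natCast]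

theorem le_rpow_natCast_div_iff {x y : ℝ} (hx : 0 ≤ x) (hy : 0 ≤ y) {m n : ℕ}
    (hn : n ≠ 0) : y ≤ x ^ ((m : ℝ) / n) ↔ y ^ n ≤ x ^ m := by
  rw [← pow_le_pow_iff_left₀ hy (rpow_nonneg hx _) hn, ← rpow_natCast (x ^ _),
    ← rpow_mul hx, div_mul_cancel₀ _ (by exact_mod_cast hn), rpow_natCast]

theorem one_add_mul_le_rpow_one_add_of_nonpos {s q : ℝ} (hs : -1 < s) (hq : q ≤ 0) :
    1 + q * s ≤ (1 + s) ^ q := by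
  rw [rpow_def_of_pos (by linarith)]
  have hexp := add_one_le_exp (log (1 + s) * q)
  have hlog := log_le_sub_one_of_pos (show 0 < 1 + s by linarith)
  nlinarith

theorem hasDerivAt_one_add_rpow (r : ℝ) {t : ℝ} (ht : 0 ≤ t) :
    HasDerivAt (fun u => (1 + u) ^ r) (r * (1 + t) ^ (r - 1)) t := by
  simpa using ((hasDerivAt_id' t).const_add 1).rpow_const (p := r) (Or.inl (by linarith))

/-- Integrate twice, starting from Bernoulli's inequality `1 + (p - 2) u ≤ (1 + u) ^ (p - 2)`. -/
theorem rpow_one_add_le_cubic {p u : ℝ} (hp₀ : 0 ≤ p) (hp₁ : p ≤ 1) (hu : 0 ≤ u) :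
    (1 + u) ^ p ≤ 1 + p * u + p * (p - 1) / 2 * u ^ 2 + p * (p - 1) * (p - 2) / 6 * u ^ 3 := by
  have hpp : p * (p - 1) ≤ 0 := mul_nonpos_of_nonneg_of_nonpos hp₀ (by linarith)
  have hderiv : ∀ t, 0 ≤ t →
      p * (1 + t) ^ (p - 1) ≤ p + p * (p - 1) * t + p * (p - 1) * (p - 2) / 2 * t ^ 2 := by
    intro t ht
    have hmono := monotoneOn_Icc_of_hasDerivAt (a := 0) (b := t)
      (f := fun v => p + p * (p - 1) * v + p * (p - 1) * (p - 2) / 2 * v ^ 2 -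
        p * (1 + v) ^ (p - 1))
      (f' := fun v => p * (p - 1) * (1 + (p - 2) * v - (1 + v) ^ (p - 2)))
      (fun v hv => by
        have h := ((((hasDerivAt_id' v).const_mul (p * (p - 1))).const_add p).add
          ((hasDerivAt_pow 2 v).const_mul (p * (p - 1) * (p - 2) / 2))).sub
          ((hasDerivAt_one_add_rpow (p - 1) hv.1).const_mul p)
        refine h.congr_deriv ?_
        rw [show p - 1 - 1 = p - 2 by ring]
        push_cast
        ring)
      (fun v hv => mul_nonneg_of_nonpos_of_nonpos hpp (by
        linarith [one_add_mul_le_rpow_one_add_of_nonpos (s := v) (q := p - 2) (by linarith [hv.1])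
          (by linarith)]))
    have := hmono (left_mem_Icc.2 ht) (right_mem_Icc.2 ht) ht
    simp only [mul_zero, add_zero, ne_eq, OfNat.ofNat_ne_zero, not_false_eq_true, zero_pow,
      one_rpow, mul_one, sub_self] at this
    linarith
  have hmono := monotoneOn_Icc_of_hasDerivAt (a := 0) (b := u)
    (f := fun v => 1 + p * v + p * (p - 1) / 2 * v ^ 2 + p * (p - 1) * (p - 2) / 6 * v ^ 3 -
      (1 + v) ^ p)
    (f' := fun v => p + p * (p - 1) * v + p * (p - 1) * (p - 2) / 2 * v ^ 2 -
      p * (1 + v) ^ (p - 1))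
    (fun v hv => by
      have h := (((((hasDerivAt_id' v).const_mul p).const_add 1).add
        ((hasDerivAt_pow 2 v).const_mul (p * (p - 1) / 2))).add
        ((hasDerivAt_pow 3 v).const_mul (p * (p - 1) * (p - 2) / 6))).sub
        (hasDerivAt_one_add_rpow p hv.1)
      refine h.congr_deriv ?_
      push_cast
      ring)
    (fun v hv => sub_nonneg.2 (hderiv v hv.1.le))
  have := hmono (left_mem_Icc.2 hu) (right_mem_Icc.2 hu) hu
  simp only [mul_zero, add_zero, ne_eq, OfNat.ofNat_ne_zero, not_false_eq_true, zero_pow,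
    one_rpow, sub_self] at this
  linarith

end Real

noncomputable def derivGap (t : ℝ) : ℝ :=
  t * sinh t ^ 2 - 3 * cosh t ^ ((7 : ℝ) / 15) * (t * cosh t - sinh t)

/-- The left side minus the right side is `t ^ 7 R (t ^ 2)` for a polynomial `R` of degree `13`
whose nonconstant coefficients are all negative and with `R (9 / 4) > 0`. -/
theorem taylor_gap_pos {t : ℝ} (ht₀ : 0 < t) (ht : t ≤ 3 / 2) :
    3 * (1 + 7 / 15 * (t ^ 2 / 2 + t ^ 4 / 24 + t ^ 6 / 720 + t ^ 8 / 8960)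
        - 28 / 225 * (t ^ 2 / 2 + t ^ 4 / 24 + t ^ 6 / 720) ^ 2
        + 644 / 10125 * (t ^ 2 / 2 + t ^ 4 / 24 + t ^ 6 / 720 + t ^ 8 / 8960) ^ 3)
      * (t * (1 + (t ^ 2 / 2 + t ^ 4 / 24 + t ^ 6 / 720 + t ^ 8 / 8960))
        - (t + t ^ 3 / 6 + t ^ 5 / 120 + t ^ 7 / 5040))
    < t * (t + t ^ 3 / 6 + t ^ 5 / 120 + t ^ 7 / 5040) ^ 2 := by
  have hy₀ : 0 ≤ t ^ 2 := sq_nonneg t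
  have hy : t ^ 2 ≤ 9 / 4 := by nlinarith
  have ht7 : 0 < t ^ 7 := by positivity
  have hk : ∀ k : ℕ, t ^ 7 * (t ^ 2) ^ k ≤ t ^ 7 * (9 / 4) ^ k := fun k =>
    mul_le_mul_of_nonneg_left (pow_le_pow_left₀ hy₀ hy k) ht7.le
  linarith [hk 1, hk 2, hk 3, hk 4, hk 5, hk 6, hk 7, hk 8, hk 9, hk 10, hk 11, hk 12, hk 13]

theorem derivGap_pos_of_le_three_halves {t : ℝ} (ht₀ : 0 < t) (ht : t ≤ 3 / 2) :
    0 < derivGap t := by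
  have hgap := taylor_gap_pos ht₀ ht
  set L := t ^ 2 / 2 + t ^ 4 / 24 + t ^ 6 / 720 with hL_def
  set U := L + t ^ 8 / 8960 with hU_def
  set S := t + t ^ 3 / 6 + t ^ 5 / 120 + t ^ 7 / 5040 with hS_def
  have hL : L ≤ cosh t - 1 := by
    have h := coshTaylor_le_cosh 4 t
    norm_num [coshTaylor, sum_range_succ, Nat.factorial] at h
    linarith
  -- The remainder term uses `cosh t ≤ 9 / 2`, and `8! = 8960 * (9 / 2)`.
  have hU : cosh t - 1 ≤ U := by
    have h32 := cosh_le_coshTaylor_add 5 (3 / 2)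
    have h := cosh_le_coshTaylor_add 4 t
    norm_num [coshTaylor, sum_range_succ, Nat.factorial] at h32 h
    have hc : cosh t ≤ cosh (3 / 2) := cosh_strictMonoOn.monotoneOn ht₀.le (by norm_num) ht
    nlinarith [pow_nonneg ht₀.le 8]
  have hS : S ≤ sinh t := by
    have h := sinhTaylor_le_sinh 4 ht₀.le
    norm_num [sinhTaylor, sum_range_succ, Nat.factorial] at h
    linarith
  have hu : 0 ≤ cosh t - 1 := by linarith [one_le_cosh t]
  have hA :
      cosh t ^ ((7 : ℝ) / 15) ≤ 1 + 7 / 15 * U - 28 / 225 * L ^ 2 + 644 / 10125 * U ^ 3 := by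
    have hpow := rpow_one_add_le_cubic (p := 7 / 15) (by norm_num) (by norm_num) hu
    rw [add_sub_cancel] at hpow
    have h2 : L ^ 2 ≤ (cosh t - 1) ^ 2 := pow_le_pow_left₀ (by positivity) hL 2
    have h3 : (cosh t - 1) ^ 3 ≤ U ^ 3 := pow_le_pow_left₀ hu hU 3
    norm_num at hpow
    linarith
  have hB₀ : 0 ≤ t * cosh t - sinh t := sub_nonneg.2 (sinh_le_mul_cosh ht₀.le)
  have hB : t * cosh t - sinh t ≤ t * (1 + U) - S := by
    linarith [mul_le_mul_of_nonneg_left (show cosh t ≤ 1 + U by linarith) ht₀.le]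
  have hAB := mul_le_mul hA hB hB₀ (by linarith [rpow_nonneg (cosh_pos t).le ((7 : ℝ) / 15)])
  have hS2 : t * S ^ 2 ≤ t * sinh t ^ 2 :=
    mul_le_mul_of_nonneg_left (pow_le_pow_left₀ (by positivity) hS 2) ht₀.le
  rw [derivGap]
  linarith

theorem derivGap_pos_of_mem_Icc {a b K t : ℝ} (ha : 0 < a) (hK : cosh b ^ ((7 : ℝ) / 15) ≤ K)
    (h₁ : 0 < sinh a + b * (2 * cosh a - 3 * K))
    (h₂ : 3 * K * (a * cosh a - sinh a) < a * sinh a ^ 2) (ht : t ∈ Icc a b) :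
    0 < derivGap t := by
  have hmono := monotoneOn_Icc_of_hasDerivAt (a := a) (b := b)
    (f := fun s => s * sinh s ^ 2 - 3 * K * (s * cosh s - sinh s))
    (f' := fun s => sinh s * (sinh s + s * (2 * cosh s - 3 * K)))
    (fun s _ => by
      have h := ((hasDerivAt_id' s).mul ((hasDerivAt_sinh s).pow 2)).sub
        ((((hasDerivAt_id' s).mul (hasDerivAt_cosh s)).sub (hasDerivAt_sinh s)).const_mul (3 * K))
      refine h.congr_deriv ?_
      simp only [Pi.pow_apply]
      ring)
    (fun s hs => by
      have hs₀ : 0 < s := ha.trans hs.1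
      have hsinh : sinh a ≤ sinh s := sinh_le_sinh.2 hs.1.le
      have hcosh : cosh a ≤ cosh s := cosh_strictMonoOn.monotoneOn ha.le hs₀.le hs.1.le
      -- `sinh a + s (2 cosh a - 3 K)` is affine in `s`, positive at `s = b` and, if
      -- increasing, bounded below by `sinh a > 0`.
      have hlin : 0 < sinh a + s * (2 * cosh a - 3 * K) := by
        rcases le_or_gt 0 (2 * cosh a - 3 * K) with hpos | hneg
        · nlinarith [sinh_pos_iff.2 ha]
        · nlinarith [hs.2]
      exact mul_nonneg (sinh_pos_iff.2 hs₀).le (by nlinarith))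
  have hg := hmono (left_mem_Icc.2 (ht.1.trans ht.2)) ht ht.1
  have ht₀ : 0 < t := ha.trans_le ht.1
  have hKt : cosh t ^ ((7 : ℝ) / 15) ≤ K := (rpow_le_rpow (cosh_pos t).le
    (cosh_strictMonoOn.monotoneOn ht₀.le (ht₀.le.trans ht.2) ht.2) (by norm_num)).trans hK
  have hB := sub_nonneg.2 (sinh_le_mul_cosh ht₀.le)
  rw [derivGap]
  nlinarith [mul_le_mul_of_nonneg_right hKt hB]

theorem derivGap_pos_of_mem_Icc_of_taylor {a b K t : ℝ} (ha : 0 < a) (hK₀ : 0 ≤ K)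
    (hra : a ^ 16 / 16! < 1) (hrb : b ^ 16 / 16! < 1)
    (hK : (coshTaylor 8 b / (1 - b ^ 16 / 16!)) ^ 7 ≤ K ^ 15)
    (h₁ : 0 < sinhTaylor 6 a + b * (2 * coshTaylor 6 a - 3 * K))
    (h₂ : 3 * K * (a * (coshTaylor 8 a / (1 - a ^ 16 / 16!)) - sinhTaylor 6 a)
      < a * sinhTaylor 6 a ^ 2)
    (ht : t ∈ Icc a b) : 0 < derivGap t := by
  have hs := sinhTaylor_le_sinh 6 ha.le
  have hc := coshTaylor_le_cosh 6 a
  have hca : cosh a ≤ coshTaylor 8 a / (1 - a ^ 16 / 16!) := cosh_le_coshTaylor_div hra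
  have hcb : cosh b ≤ coshTaylor 8 b / (1 - b ^ 16 / 16!) := cosh_le_coshTaylor_div hrb
  have hb : 0 ≤ b := ha.le.trans (ht.1.trans ht.2)
  refine derivGap_pos_of_mem_Icc (K := K) ha ?_ (by nlinarith) ?_ ht
  · exact_mod_cast (rpow_natCast_div_le_iff (cosh_pos b).le hK₀ (m := 7) (n := 15)
      (by norm_num)).2 ((pow_le_pow_left₀ (cosh_pos b).le hcb 7).trans hK)
  · nlinarith [pow_le_pow_left₀ (sinhTaylor_nonneg 6 ha.le) hs 2,
      mul_le_mul_of_nonneg_left hca (mul_nonneg hK₀ ha.le)]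

theorem derivGap_pos_of_mem_Icc_three_halves_seven_halves {t : ℝ}
    (ht : t ∈ Icc (3 / 2 : ℝ) (7 / 2)) : 0 < derivGap t := by
  -- On each piece `[a, b]`, `K` is `cosh b ^ (7 / 15)` rounded up to two decimals.
  rcases le_total t (5 / 3) with h₁ | h₁
  · refine derivGap_pos_of_mem_Icc_of_taylor (a := 3 / 2) (b := 5 / 3) (K := 161 / 100)
      ?_ ?_ ?_ ?_ ?_ ?_ ?_ ⟨ht.1, h₁⟩ <;>
    norm_num [coshTaylor, sinhTaylor, sum_range_succ, Nat.factorial]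
  rcases le_total t (19 / 10) with h₂ | h₂
  · refine derivGap_pos_of_mem_Icc_of_taylor (a := 5 / 3) (b := 19 / 10) (K := 89 / 50)
      ?_ ?_ ?_ ?_ ?_ ?_ ?_ ⟨h₁, h₂⟩ <;>
    norm_num [coshTaylor, sinhTaylor, sum_range_succ, Nat.factorial]
  rcases le_total t (9 / 4) with h₃ | h₃
  · refine derivGap_pos_of_mem_Icc_of_taylor (a := 19 / 10) (b := 9 / 4) (K := 52 / 25)
      ?_ ?_ ?_ ?_ ?_ ?_ ?_ ⟨h₂, h₃⟩ <;>
    norm_num [coshTaylor, sinhTaylor, sum_range_succ, Nat.factorial]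
  rcases le_total t (14 / 5) with h₄ | h₄
  · refine derivGap_pos_of_mem_Icc_of_taylor (a := 9 / 4) (b := 14 / 5) (K := 67 / 25)
      ?_ ?_ ?_ ?_ ?_ ?_ ?_ ⟨h₃, h₄⟩ <;>
    norm_num [coshTaylor, sinhTaylor, sum_range_succ, Nat.factorial]
  · refine derivGap_pos_of_mem_Icc_of_taylor (a := 14 / 5) (b := 7 / 2) (K := 371 / 100)
      ?_ ?_ ?_ ?_ ?_ ?_ ?_ ⟨h₄, ht.2⟩ <;>
    norm_num [coshTaylor, sinhTaylor, sum_range_succ, Nat.factorial]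

theorem derivGap_pos_of_four_le_cosh_rpow {t : ℝ} (ht : 0 < t)
    (h : 4 ≤ cosh t ^ ((8 : ℝ) / 15)) : 0 < derivGap t := by
  set A := cosh t ^ ((7 : ℝ) / 15)
  have hc : 1 < cosh t := one_lt_cosh.2 ht.ne'
  have hA : 1 ≤ A := one_le_rpow hc.le (by norm_num)
  have hsq : 4 * A * cosh t ≤ cosh t ^ 2 := by
    have hsplit : cosh t = A * cosh t ^ ((8 : ℝ) / 15) := by
      rw [← rpow_add (cosh_pos t)]
      norm_num
    nth_rw 1 [sq, hsplit]
    have hAc₀ : 0 ≤ A * cosh t := mul_nonneg (by linarith) (cosh_pos t).le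
    nlinarith [mul_le_mul_of_nonneg_left h hAc₀]
  have hAs : 0 ≤ A * sinh t := mul_nonneg (by linarith) (sinh_pos_iff.2 ht).le
  have hAc : 1 < A * cosh t := by nlinarith
  rw [derivGap, sinh_sq]
  nlinarith

theorem derivGap_pos {t : ℝ} (ht : 0 < t) : 0 < derivGap t := by
  rcases le_total t (3 / 2) with h₁ | h₁
  · exact derivGap_pos_of_le_three_halves ht h₁
  rcases le_total t (7 / 2) with h₂ | h₂
  · exact derivGap_pos_of_mem_Icc_three_halves_seven_halves ⟨h₁, h₂⟩
  refine derivGap_pos_of_four_le_cosh_rpow ht ?_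
  have h16 : 16 ≤ cosh t := by
    have h := coshTaylor_le_cosh 5 (7 / 2)
    norm_num [coshTaylor, sum_range_succ, Nat.factorial] at h
    linarith [cosh_strictMonoOn.monotoneOn (by norm_num : (0 : ℝ) ≤ 7 / 2) ht.le h₂]
  exact_mod_cast (le_rpow_natCast_div_iff (cosh_pos t).le (by norm_num) (m := 8) (n := 15)
    (by norm_num)).2 (le_trans (by norm_num) (pow_le_pow_left₀ (by norm_num) h16 8))

noncomputable def logGap (t : ℝ) : ℝ :=
  5 / 8 * (cosh t ^ ((8 : ℝ) / 15) - 1) - log (sinh t / t)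

theorem hasDerivAt_logGap {t : ℝ} (ht : 0 < t) :
    HasDerivAt logGap (derivGap t / (3 * t * sinh t * cosh t ^ ((7 : ℝ) / 15))) t := by
  have hs : 0 < sinh t := sinh_pos_iff.2 ht
  have hc : 0 < cosh t := cosh_pos t
  have h := (((hasDerivAt_cosh t).rpow_const (p := (8 : ℝ) / 15) (Or.inl hc.ne')).sub_const 1
    |>.const_mul (5 / 8)).sub (((hasDerivAt_sinh t).div (hasDerivAt_id' t) ht.ne').log
      (div_pos hs ht).ne')
  refine h.congr_deriv ?_
  have hrpow : cosh t ^ ((8 : ℝ) / 15 - 1) = (cosh t ^ ((7 : ℝ) / 15))⁻¹ := by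
    rw [show (8 : ℝ) / 15 - 1 = -(7 / 15) by norm_num, rpow_neg hc.le]
  have := rpow_pos_of_pos hc ((7 : ℝ) / 15)
  simp only [Pi.div_apply]
  rw [hrpow, derivGap]
  field_simp
  ring

theorem tendsto_logGap_zero : Tendsto logGap (𝓝[>] 0) (𝓝 0) := by
  have hsinh : Tendsto (fun t => sinh t / t) (𝓝[>] 0) (𝓝 1) := by
    simpa [div_eq_inv_mul] using (hasDerivAt_sinh 0).tendsto_slope_zero_right
  have hcosh : Tendsto (fun t => cosh t ^ ((8 : ℝ) / 15)) (𝓝[>] 0) (𝓝 1) := by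
    have : ContinuousAt (fun t => cosh t ^ ((8 : ℝ) / 15)) 0 :=
      continuous_cosh.continuousAt.rpow_const (Or.inl (cosh_pos 0).ne')
    simpa using this.tendsto.mono_left nhdsWithin_le_nhds
  have := ((hcosh.sub_const 1).const_mul (5 / 8)).sub (hsinh.log one_ne_zero)
  rwa [sub_self, mul_zero, log_one, sub_self] at this

theorem stmt_15 (x : ℝ) (hx : 0 < x) :
    Real.sinh x / x < Real.exp ((5 / 8) * (Real.cosh x) ^ ((8 : ℝ) / 15) - 5 / 8) := by
  have hmono : StrictMonoOn logGap (Ioi 0) :=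
    strictMonoOn_of_hasDerivWithinAt_pos (convex_Ioi 0)
      (fun t ht => (hasDerivAt_logGap ht).continuousAt.continuousWithinAt)
      (fun t ht => by
        rw [interior_Ioi] at ht ⊢
        exact (hasDerivAt_logGap ht).hasDerivWithinAt)
      (fun t ht => by
        rw [interior_Ioi] at ht
        exact div_pos (derivGap_pos ht) (mul_pos (mul_pos (mul_pos three_pos ht)
          (sinh_pos_iff.2 ht)) (rpow_pos_of_pos (cosh_pos t) _)))
  have hpos := hmono.lt_of_tendsto_nhdsGT tendsto_logGap_zero hx
  rw [logGap, sub_pos] at hpos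
  rw [← exp_log (div_pos (sinh_pos_iff.2 hx) hx)]
  exact exp_lt_exp.2 (by linarith)
end

section
/- For all x > 0, (sinh x)/x > (1/2 + (1/2)·cosh^{16/15} x)^{5/8}. -/
/-!
Write `y = sinh t / t`, extended by `1` at `0`. The function `F t = 2 y ^ (8/5) - cosh t ^ (16/15)`
equals `1` at `0`, and the claim is `1 < F x`, so it suffices that `F' > 0` on `(0, ∞)`.
Raised to the 15th power, `F' > 0` reads `t³⁹ cosh t sinh⁶ t < (3 (t cosh t - sinh t))¹⁵`.
This follows from Lazarević's inequality `t³ cosh t ≤ sinh³ t` (compare the power series,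
using `4 sinh³ t = sinh 3t - 3 sinh t`) and the cube of `t¹² sinh³ t < (3 (t cosh t - sinh t))⁵`,
which reduces to a polynomial inequality between Taylor bounds for `t ≤ 4` and to exponential
growth of `cosh` for `t ≥ 4`.
-/

open Real Finset Set Topology
open scoped Nat

namespace Real

lemma pow_div_factorial_add_le {x : ℝ} (hx : 0 ≤ x) (m j : ℕ) :
    x ^ (m + j) / (m + j)! ≤ x ^ m / m ! * (x ^ j / j !) := by
  rw [div_mul_div_comm, ← pow_add]
  gcongr
  exact_mod_cast Nat.le_of_dvd (by positivity) (Nat.factorial_mul_factorial_dvd_factorial_add m j)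

lemma sinh_le_sum_add_mul_cosh {x : ℝ} (hx : 0 ≤ x) (n : ℕ) :
    sinh x ≤ ∑ k ∈ range n, x ^ (2 * k + 1) / (2 * k + 1)! +
      x ^ (2 * n + 1) / (2 * n + 1)! * cosh x := by
  have tail := (hasSum_nat_add_iff' n).2 (hasSum_sinh x)
  have h := hasSum_le (fun k => ?_) tail ((hasSum_cosh x).mul_left (x ^ (2 * n + 1) / (2 * n + 1)!))
  · linarith
  · have := pow_div_factorial_add_le hx (2 * n + 1) (2 * k)
    rwa [show 2 * n + 1 + 2 * k = 2 * (k + n) + 1 by ring] at this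

lemma sum_le_mul_cosh_sub_sinh {x : ℝ} (hx : 0 ≤ x) (n : ℕ) :
    ∑ k ∈ range n, 2 * k * x ^ (2 * k + 1) / (2 * k + 1)! ≤ x * cosh x - sinh x := by
  have term (k : ℕ) : x * (x ^ (2 * k) / (2 * k)!) - x ^ (2 * k + 1) / (2 * k + 1)! =
      2 * k * x ^ (2 * k + 1) / (2 * k + 1)! := by
    rw [Nat.factorial_succ, pow_succ]
    push_cast
    field_simp
    ring
  have h := ((hasSum_cosh x).mul_left x).sub (hasSum_sinh x)
  simp only [term] at h
  exact sum_le_hasSum _ (fun k _ => by positivity) h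

lemma pow_three_mul_cosh_le_sinh_pow_three {x : ℝ} (hx : 0 ≤ x) : x ^ 3 * cosh x ≤ sinh x ^ 3 := by
  have hcube : sinh x ^ 3 = (sinh (3 * x) - 3 * sinh x) / 4 := by rw [sinh_three_mul]; ring
  have h := ((hasSum_sinh (3 * x)).sub ((hasSum_sinh x).mul_left 3)).div_const 4
  rw [← hcube, ← hasSum_nat_add_iff' 1] at h
  simp only [range_one, sum_singleton] at h
  refine hasSum_le (fun k => ?_) ((hasSum_cosh x).mul_left (x ^ 3)) (by simpa using h)
  have hfac : ((2 * k + 3)! : ℝ) = (2 * k + 1) * (2 * k + 2) * (2 * k + 3) * (2 * k)! := by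
    push_cast [Nat.factorial_succ]; ring
  have hcoef_nat (m : ℕ) : 4 * ((2 * m + 1) * (2 * m + 2) * (2 * m + 3)) + 3 ≤ 3 ^ (2 * m + 3) := by
    induction m with
    | zero => norm_num
    | succ m ih =>
      rw [show 2 * (m + 1) + 3 = 2 * m + 3 + 2 by ring, pow_add]
      ring_nf at ih ⊢
      nlinarith
  have hcoef : ((2 * k + 1) * (2 * k + 2) * (2 * k + 3) : ℝ) ≤ (3 ^ (2 * k + 3) - 3) / 4 := by
    have : (4 * ((2 * k + 1) * (2 * k + 2) * (2 * k + 3)) + 3 : ℝ) ≤ 3 ^ (2 * k + 3) := by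
      exact_mod_cast hcoef_nat k
    linarith
  have hP : 0 ≤ x ^ (2 * k + 3) / (2 * k + 3)! := by positivity
  calc x ^ 3 * (x ^ (2 * k) / (2 * k)!)
      = (2 * k + 1) * (2 * k + 2) * (2 * k + 3) * (x ^ (2 * k + 3) / (2 * k + 3)!) := by
        rw [hfac]; field_simp; ring
    _ ≤ (3 ^ (2 * k + 3) - 3) / 4 * (x ^ (2 * k + 3) / (2 * k + 3)!) := by gcongr
    _ = _ := by rw [show 2 * (k + 1) + 1 = 2 * k + 3 by ring, mul_pow]; ring

lemma cosh_lt_twentyEight_of_abs_le_four {x : ℝ} (hx : |x| ≤ 4) : cosh x < 28 := by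
  have h4 : exp 4 < 55 := by
    have h := pow_lt_pow_left₀ exp_one_lt_d9 (exp_pos 1).le (by norm_num : (4 : ℕ) ≠ 0)
    rw [← exp_nat_mul] at h
    norm_num at h
    linarith
  have := exp_le_one_iff.2 (by norm_num : (-4 : ℝ) ≤ 0)
  calc cosh x ≤ cosh 4 := cosh_le_cosh.2 (by rwa [abs_of_pos (by norm_num : (0 : ℝ) < 4)])
    _ < 28 := by rw [cosh_eq]; linarith

/-- In `u = t²`, the left polynomial bounds `sinh t / t` from above for `t ≤ 4` (its last
coefficient is `28 / 11!`, from `cosh ≤ 28`) and the right one bounds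
`3 (t cosh t - sinh t) / t³` from below. -/
lemma taylor_bound_cube_lt_pow_five {u : ℝ} (hu : 0 < u) (hu16 : u ≤ 16) :
    (1 + u / 6 + u ^ 2 / 120 + u ^ 3 / 5040 + u ^ 4 / 362880 + u ^ 5 / 1425600) ^ 3
      < (1 + u / 10 + u ^ 2 / 280 + u ^ 3 / 15120) ^ 5 := by
  have hpow (k : ℕ) : 0 < u ^ k := pow_pos hu k
  have hcut (k : ℕ) : 0 ≤ u ^ k * (16 - u) := mul_nonneg (hpow k).le (sub_nonneg.2 hu16)
  nlinarith [hpow 2, hpow 3, hpow 4, hpow 5, hpow 6, hpow 7, hpow 8,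
    hcut 9, hcut 10, hcut 11, hcut 12, hcut 13, hcut 14]

lemma pow_twelve_mul_sinh_pow_three_lt_of_le_four {t : ℝ} (ht : 0 < t) (ht4 : t ≤ 4) :
    t ^ 12 * sinh t ^ 3 < (3 * (t * cosh t - sinh t)) ^ 5 := by
  set u := t ^ 2
  have hsinh : sinh t ≤
      t * (1 + u / 6 + u ^ 2 / 120 + u ^ 3 / 5040 + u ^ 4 / 362880 + u ^ 5 / 1425600) := by
    have h := sinh_le_sum_add_mul_cosh ht.le 5
    have hc := cosh_lt_twentyEight_of_abs_le_four (x := t) (by rwa [abs_of_pos ht])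
    simp only [sum_range_succ, range_zero, sum_empty, Nat.factorial] at h
    norm_num at h
    nlinarith [pow_pos ht 11]
  have hdiff : t ^ 3 * (1 + u / 10 + u ^ 2 / 280 + u ^ 3 / 15120) ≤ 3 * (t * cosh t - sinh t) := by
    have h := sum_le_mul_cosh_sub_sinh ht.le 5
    simp only [sum_range_succ, range_zero, sum_empty, Nat.factorial] at h
    norm_num at h
    nlinarith
  have hs : 0 ≤ sinh t := (sinh_pos_iff.2 ht).le
  calc t ^ 12 * sinh t ^ 3
      ≤ t ^ 12 * (t * (1 + u / 6 + u ^ 2 / 120 + u ^ 3 / 5040 + u ^ 4 / 362880 +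
          u ^ 5 / 1425600)) ^ 3 := by gcongr
    _ = t ^ 15 * (1 + u / 6 + u ^ 2 / 120 + u ^ 3 / 5040 + u ^ 4 / 362880 +
          u ^ 5 / 1425600) ^ 3 := by ring
    _ < t ^ 15 * (1 + u / 10 + u ^ 2 / 280 + u ^ 3 / 15120) ^ 5 := by
        gcongr; exact taylor_bound_cube_lt_pow_five (by positivity) (by nlinarith)
    _ = (t ^ 3 * (1 + u / 10 + u ^ 2 / 280 + u ^ 3 / 15120)) ^ 5 := by ring
    _ ≤ (3 * (t * cosh t - sinh t)) ^ 5 := by gcongr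

lemma pow_seven_lt_mul_cosh_sq {t : ℝ} (ht : 0 < t) : t ^ 7 < 3 ^ 10 / 4 ^ 5 * cosh t ^ 2 := by
  -- `27 / 35 < 2e / 7`; the seventh root of `exp (2t)` is compared with its tangent line `e s`.
  have hlin : 27 / 35 * t ≤ exp (2 * t / 7) := by
    have := exp_one_mul_le_exp (x := 2 * t / 7)
    nlinarith [exp_one_gt_d9]
  have hexp : (27 / 35 * t) ^ 7 ≤ exp t ^ 2 := by
    calc (27 / 35 * t) ^ 7 ≤ exp (2 * t / 7) ^ 7 := by gcongr
      _ = exp t ^ 2 := by rw [← exp_nat_mul, ← exp_nat_mul]; ring_nf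
  have hcosh : exp t ≤ 2 * cosh t := by rw [cosh_eq]; linarith [exp_pos (-t)]
  have := pow_le_pow_left₀ (exp_pos t).le hcosh 2
  rw [mul_pow] at hexp
  nlinarith [pow_pos ht 7]

lemma pow_twelve_mul_sinh_pow_three_lt_of_four_le {t : ℝ} (ht4 : 4 ≤ t) :
    t ^ 12 * sinh t ^ 3 < (3 * (t * cosh t - sinh t)) ^ 5 := by
  have hc := cosh_pos t
  have hs : 0 < sinh t := sinh_pos_iff.2 (by linarith)
  have hsc := sinh_lt_cosh t
  have hlow : 9 / 4 * t * cosh t ≤ 3 * (t * cosh t - sinh t) := by nlinarith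
  calc t ^ 12 * sinh t ^ 3 ≤ t ^ 12 * cosh t ^ 3 := by gcongr
    _ < (9 / 4 * t * cosh t) ^ 5 := by
        have := pow_seven_lt_mul_cosh_sq (by linarith : (0 : ℝ) < t)
        have h : 0 < t ^ 5 * cosh t ^ 3 := by positivity
        nlinarith [mul_lt_mul_of_pos_left this h]
    _ ≤ (3 * (t * cosh t - sinh t)) ^ 5 := by gcongr

lemma pow_twelve_mul_sinh_pow_three_lt {t : ℝ} (ht : 0 < t) :
    t ^ 12 * sinh t ^ 3 < (3 * (t * cosh t - sinh t)) ^ 5 := by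
  rcases le_total t 4 with ht4 | ht4
  · exact pow_twelve_mul_sinh_pow_three_lt_of_le_four ht ht4
  · exact pow_twelve_mul_sinh_pow_three_lt_of_four_le ht4

lemma pow_mul_cosh_mul_sinh_pow_six_lt {t : ℝ} (ht : 0 < t) :
    t ^ 39 * cosh t * sinh t ^ 6 < (3 * (t * cosh t - sinh t)) ^ 15 := by
  have hs : 0 < sinh t := sinh_pos_iff.2 ht
  calc t ^ 39 * cosh t * sinh t ^ 6 = t ^ 36 * sinh t ^ 6 * (t ^ 3 * cosh t) := by ring
    _ ≤ t ^ 36 * sinh t ^ 6 * sinh t ^ 3 := by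
        gcongr; exact pow_three_mul_cosh_le_sinh_pow_three ht.le
    _ = (t ^ 12 * sinh t ^ 3) ^ 3 := by ring
    _ < ((3 * (t * cosh t - sinh t)) ^ 5) ^ 3 := by
        gcongr; exact pow_twelve_mul_sinh_pow_three_lt ht
    _ = (3 * (t * cosh t - sinh t)) ^ 15 := by ring

lemma cosh_rpow_mul_sinh_lt {t : ℝ} (ht : 0 < t) :
    cosh t ^ (1 / 15 : ℝ) * sinh t <
      3 * (sinh t / t) ^ (3 / 5 : ℝ) * ((t * cosh t - sinh t) / t ^ 2) := by
  have hs : 0 < sinh t := sinh_pos_iff.2 ht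
  have hkey := pow_mul_cosh_mul_sinh_pow_six_lt ht
  have hd : 0 < 3 * (t * cosh t - sinh t) :=
    (Odd.pow_pos_iff (by decide)).1 (lt_trans (by positivity) hkey)
  refine lt_of_pow_lt_pow_left₀ 15
    (mul_pos (by positivity) (div_pos (by linarith) (by positivity))).le ?_
  have hc15 : (cosh t ^ (1 / 15 : ℝ)) ^ 15 = cosh t := by
    rw [← rpow_natCast, ← rpow_mul (cosh_pos t).le]; norm_num
  have hy15 : ((sinh t / t) ^ (3 / 5 : ℝ)) ^ 15 = (sinh t / t) ^ 9 := by
    rw [← rpow_natCast, ← rpow_mul (by positivity)]; norm_num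
  have hrhs : (3 * (sinh t / t) ^ (3 / 5 : ℝ) * ((t * cosh t - sinh t) / t ^ 2)) ^ 15
      = (3 * (t * cosh t - sinh t)) ^ 15 * sinh t ^ 9 / t ^ 39 := by
    rw [mul_pow, mul_pow, hy15]; field_simp
  rw [mul_pow, hc15, hrhs, lt_div_iff₀ (by positivity)]
  nlinarith [mul_lt_mul_of_pos_right hkey (pow_pos hs 9)]

lemma dslope_sinh_zero_of_ne {t : ℝ} (ht : t ≠ 0) : dslope sinh 0 t = sinh t / t := by
  rw [dslope_of_ne _ ht, slope_def_field, sinh_zero, sub_zero, sub_zero]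

lemma continuous_dslope_sinh_zero : Continuous (dslope sinh 0) :=
  continuous_iff_continuousAt.2 fun t => by
    rcases eq_or_ne t 0 with rfl | ht
    · exact continuousAt_dslope_same.2 (differentiable_sinh 0)
    · exact (continuousAt_dslope_of_ne ht).2 continuous_sinh.continuousAt

end Real

/-- `dslope sinh 0` is `t ↦ sinh t / t` extended continuously by `1` at `0`. -/
noncomputable def sinhMeanGap (t : ℝ) : ℝ :=
  2 * dslope sinh 0 t ^ (8 / 5 : ℝ) - cosh t ^ (16 / 15 : ℝ)

lemma sinhMeanGap_zero : sinhMeanGap 0 = 1 := by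
  rw [sinhMeanGap, dslope_same, Real.deriv_sinh, cosh_zero, one_rpow, one_rpow]; norm_num

lemma continuous_sinhMeanGap : Continuous sinhMeanGap :=
  ((continuous_dslope_sinh_zero.rpow_const fun _ => Or.inr (by norm_num)).const_mul 2).sub
    (continuous_cosh.rpow_const fun _ => Or.inr (by norm_num))

lemma deriv_sinhMeanGap_pos {t : ℝ} (ht : 0 < t) : 0 < deriv sinhMeanGap t := by
  have hy : HasDerivAt (fun t => sinh t / t) ((t * cosh t - sinh t) / t ^ 2) t :=
    ((hasDerivAt_sinh t).fun_div (hasDerivAt_id' t) ht.ne').congr_deriv (by ring)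
  have hG := ((hy.rpow_const (p := 8 / 5) (Or.inr (by norm_num))).const_mul 2).sub
    ((hasDerivAt_cosh t).rpow_const (p := 16 / 15) (Or.inr (by norm_num)))
  have hF : sinhMeanGap =ᶠ[𝓝 t] fun t => 2 * (sinh t / t) ^ (8 / 5 : ℝ) - cosh t ^ (16 / 15 : ℝ) := by
    filter_upwards [eventually_ne_nhds ht.ne'] with s hs
    rw [sinhMeanGap, dslope_sinh_zero_of_ne hs]
  rw [(hG.congr_of_eventuallyEq hF).deriv]
  norm_num
  linarith [cosh_rpow_mul_sinh_lt ht]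

lemma strictMonoOn_sinhMeanGap : StrictMonoOn sinhMeanGap (Ici 0) :=
  strictMonoOn_of_deriv_pos (convex_Ici 0) continuous_sinhMeanGap.continuousOn fun t ht =>
    deriv_sinhMeanGap_pos (by rwa [interior_Ici] at ht)

theorem stmt_16 (x : ℝ) (hx : 0 < x) :
    Real.sinh x / x > (1 / 2 + (1 / 2) * (Real.cosh x) ^ ((16 : ℝ) / 15)) ^ ((5 : ℝ) / 8) := by
  have h := strictMonoOn_sinhMeanGap self_mem_Ici hx.le hx
  rw [sinhMeanGap_zero, sinhMeanGap, dslope_sinh_zero_of_ne hx.ne'] at h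
  rw [gt_iff_lt, show (5 / 8 : ℝ) = (8 / 5)⁻¹ by norm_num,
    rpow_inv_lt_iff_of_pos (by positivity) (by positivity) (by norm_num)]
  linarith
end

section
/- For all x > 0, (sinh x)/x > ((28/51) + (23/51)·(cosh x)^{34/35})^{35/46}. -/
/-!
Write `F x = (sinh x / x) ^ (46/35)` and `G x = (cosh x) ^ (34/35)`. The difference
`F - (23/51) G` tends to `28/51` at `0⁺` and has derivative `G' (F'/G' - 23/51)`, so it suffices
that the ratio `F'/G'` stays above `23/51`, its limiting value at `0⁺` (for the lower bound at `0⁺`,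
`x cosh x - sinh x ≥ x³/3` is enough). The ratio is increasing: after the triple-angle formulas,
the numerator of its logarithmic derivative is a combination of `x² cosh 3x`, `x sinh 3x`,
`cosh 3x`, … whose Taylor coefficients `numCoeff n` are all nonnegative.
-/

open Real Set Filter Topology
open scoped Nat

theorem StrictMonoOn.lt_of_tendsto_nhdsGT_of_le {α β : Type*} [LinearOrder α]
    [TopologicalSpace α] [OrderTopology α] [DenselyOrdered α] [LinearOrder β]
    [TopologicalSpace β] [OrderClosedTopology β] {f g : α → β} {a x : α} {L : β}
    (hf : StrictMonoOn f (Ioi a)) (hg : Tendsto g (𝓝[>] a) (𝓝 L))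
    (hgf : ∀ᶠ t in 𝓝[>] a, g t ≤ f t) (hx : a < x) : L < f x := by
  obtain ⟨y, hay, hyx⟩ := exists_between hx
  have : (𝓝[>] a).NeBot := nhdsGT_neBot_of_exists_gt ⟨x, hx⟩
  have hLy : L ≤ f y := by
    refine le_of_tendsto hg ?_
    filter_upwards [hgf, Ioo_mem_nhdsGT hay] with t hgt ht
    exact hgt.trans (hf ht.1 hay ht.2).le
  exact hLy.trans_lt (hf hay hx hyx)

theorem cube_div_three_lt_mul_cosh_sub_sinh {x : ℝ} (hx : 0 < x) :
    x ^ 3 / 3 < x * cosh x - sinh x := by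
  set D : ℝ → ℝ := fun t ↦ t * cosh t - sinh t - t ^ 3 / 3
  have hD (t : ℝ) : HasDerivAt D (t * (sinh t - t)) t :=
    ((((hasDerivAt_id' t).mul (hasDerivAt_cosh t)).sub (hasDerivAt_sinh t)).sub
      ((hasDerivAt_pow 3 t).div_const 3)).congr_deriv (by push_cast; ring)
  have hmono : StrictMonoOn D (Ici 0) := by
    refine strictMonoOn_of_hasDerivWithinAt_pos (convex_Ici 0)
      (fun t _ ↦ (hD t).continuousAt.continuousWithinAt) (fun t _ ↦ (hD t).hasDerivWithinAt) ?_
    rw [interior_Ici]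
    exact fun t ht ↦ mul_pos ht (sub_pos.2 (self_lt_sinh_iff.2 ht))
  have := hmono self_mem_Ici hx.le hx
  simp only [D, zero_mul, cosh_zero, sinh_zero] at this
  linarith

theorem mul_cosh_sub_sinh_pos {x : ℝ} (hx : 0 < x) : 0 < x * cosh x - sinh x :=
  (by positivity : 0 < x ^ 3 / 3).trans (cube_div_three_lt_mul_cosh_sub_sinh hx)

theorem tendsto_sinh_div_self : Tendsto (fun x ↦ sinh x / x) (𝓝[≠] 0) (𝓝 1) := by
  have := (hasDerivAt_sinh 0).tendsto_slope_zero
  simp only [zero_add, sinh_zero, sub_zero, cosh_zero, smul_eq_mul] at this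
  simpa only [div_eq_inv_mul] using this

theorem hasSum_sq_mul_cosh (a x : ℝ) :
    HasSum (fun n : ℕ ↦ (2 * n + 1) * (2 * n + 2) * a ^ (2 * n) * x ^ (2 * n + 2) / (2 * n + 2)!)
      (x ^ 2 * cosh (a * x)) := by
  refine ((hasSum_cosh (a * x)).mul_left (x ^ 2)).congr_fun fun n ↦ ?_
  rw [Nat.factorial_succ, Nat.factorial_succ]
  push_cast
  field_simp
  ring

theorem hasSum_mul_sinh (a x : ℝ) :
    HasSum (fun n : ℕ ↦ (2 * n + 2) * a ^ (2 * n + 1) * x ^ (2 * n + 2) / (2 * n + 2)!)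
      (x * sinh (a * x)) := by
  refine ((hasSum_sinh (a * x)).mul_left x).congr_fun fun n ↦ ?_
  rw [Nat.factorial_succ (2 * n + 1)]
  push_cast
  field_simp
  ring

theorem hasSum_cosh_sub_one (a x : ℝ) :
    HasSum (fun n : ℕ ↦ a ^ (2 * n + 2) * x ^ (2 * n + 2) / (2 * n + 2)!) (cosh (a * x) - 1) := by
  have := (hasSum_nat_add_iff' 1).2 (hasSum_cosh (a * x))
  simp only [Finset.sum_range_one, mul_zero, pow_zero, Nat.factorial_zero, Nat.cast_one,
    div_one] at this
  refine this.congr_fun fun n ↦ ?_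
  rw [mul_pow]; ring_nf

namespace SinhDivRpow

def numCoeff (n : ℕ) : ℝ :=
  9 ^ n * (48 * n ^ 2 - 276 * n + 405) - (432 * n ^ 2 + 756 * n + 405)

theorem numCoeff_nonneg (n : ℕ) : 0 ≤ numCoeff n := by
  unfold numCoeff
  rcases le_or_gt n 5 with hn | hn
  · interval_cases n <;> norm_num
  have hn6 : (6 : ℝ) ≤ n := by exact_mod_cast hn
  have h9 : (9 : ℝ) ^ 6 ≤ 9 ^ n := pow_le_pow_right₀ (by norm_num) hn
  have hquad : 2 * (n : ℝ) ^ 2 ≤ 48 * n ^ 2 - 276 * n + 405 := by nlinarith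
  nlinarith [mul_le_mul h9 hquad (by positivity) (by positivity)]

noncomputable def logRatioDerivNum (x : ℝ) : ℝ :=
  35 * x ^ 2 * sinh x ^ 2 * cosh x + x * sinh x ^ 2 * (x * cosh x - sinh x)
    - 24 * x * cosh x ^ 2 * (x * cosh x - sinh x)
    - 81 * sinh x * cosh x * (x * cosh x - sinh x)

theorem four_mul_logRatioDerivNum (x : ℝ) :
    4 * logRatioDerivNum x = 12 * (x ^ 2 * cosh (3 * x)) - 108 * (x ^ 2 * cosh x)
      - 58 * (x * sinh (3 * x)) - 54 * (x * sinh x) + 81 * (cosh (3 * x) - cosh x) := by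
  rw [cosh_three_mul, sinh_three_mul, logRatioDerivNum]
  linear_combination (-(144 * x ^ 2 * cosh x + 228 * x * sinh x + 324 * cosh x)) * cosh_sq x

theorem hasSum_logRatioDerivNum (x : ℝ) :
    HasSum (fun n : ℕ ↦ numCoeff n * x ^ (2 * n + 2) / (2 * n + 2)!) (4 * logRatioDerivNum x) := by
  have h := (((((hasSum_sq_mul_cosh 3 x).mul_left 12).sub ((hasSum_sq_mul_cosh 1 x).mul_left 108)).sub
    ((hasSum_mul_sinh 3 x).mul_left 58)).sub ((hasSum_mul_sinh 1 x).mul_left 54)).add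
    (((hasSum_cosh_sub_one 3 x).sub (hasSum_cosh_sub_one 1 x)).mul_left 81)
  simp only [one_pow, one_mul, mul_one, sub_sub_sub_cancel_right] at h
  rw [four_mul_logRatioDerivNum]
  refine h.congr_fun fun n ↦ ?_
  have h9 : (3 : ℝ) ^ (2 * n) = 9 ^ n := by rw [pow_mul]; norm_num
  simp only [pow_succ, h9, numCoeff]
  ring

theorem logRatioDerivNum_pos {x : ℝ} (hx : 0 < x) : 0 < logRatioDerivNum x := by
  -- `numCoeff n = 0` for `n ≤ 3`, so the series starts at the `x ^ 10` term.
  have h4 : numCoeff 4 * x ^ 10 / 10! ≤ 4 * logRatioDerivNum x :=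
    le_hasSum (hasSum_logRatioDerivNum x) 4 fun n _ ↦ by
      have := numCoeff_nonneg n
      positivity
  have : 0 < numCoeff 4 * x ^ 10 / 10! := by
    norm_num [numCoeff]
    positivity
  linarith

noncomputable def F (x : ℝ) : ℝ := (sinh x / x) ^ (46 / 35 : ℝ)

noncomputable def G (x : ℝ) : ℝ := cosh x ^ (34 / 35 : ℝ)

noncomputable def derivG (x : ℝ) : ℝ := 34 / 35 * sinh x / cosh x ^ (1 / 35 : ℝ)

noncomputable def ratio (x : ℝ) : ℝ :=
  23 / 17 * (sinh x / x) ^ (11 / 35 : ℝ) * cosh x ^ (1 / 35 : ℝ)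
    * ((x * cosh x - sinh x) / (x ^ 2 * sinh x))

noncomputable def logRatio (x : ℝ) : ℝ :=
  11 / 35 * log (sinh x / x) + 1 / 35 * log (cosh x) + log (x * cosh x - sinh x)
    - 2 * log x - log (sinh x)

theorem ratio_eq_exp_logRatio {x : ℝ} (hx : 0 < x) : ratio x = 23 / 17 * exp (logRatio x) := by
  have hs : 0 < sinh x := sinh_pos_iff.2 hx
  have hq := mul_cosh_sub_sinh_pos hx
  simp only [logRatio, exp_sub, exp_add, exp_log hq, exp_log hs, ratio]
  rw [mul_comm (11 / 35 : ℝ), mul_comm (1 / 35 : ℝ), mul_comm (2 : ℝ),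
    ← rpow_def_of_pos (div_pos hs hx), ← rpow_def_of_pos (cosh_pos x), ← rpow_def_of_pos hx,
    rpow_two]
  field_simp

theorem hasDerivAt_logRatio {x : ℝ} (hx : 0 < x) :
    HasDerivAt logRatio
      (logRatioDerivNum x / (35 * x * sinh x * cosh x * (x * cosh x - sinh x))) x := by
  have hs : 0 < sinh x := sinh_pos_iff.2 hx
  have hc : 0 < cosh x := cosh_pos x
  have hq := mul_cosh_sub_sinh_pos hx
  have h1 := ((hasDerivAt_sinh x).div (hasDerivAt_id' x) hx.ne').log (div_pos hs hx).ne'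
  have h2 := (hasDerivAt_cosh x).log hc.ne'
  have h3 := (((hasDerivAt_id' x).mul (hasDerivAt_cosh x)).sub (hasDerivAt_sinh x)).log hq.ne'
  have h4 := hasDerivAt_log hx.ne'
  have h5 := (hasDerivAt_sinh x).log hs.ne'
  refine (((((h1.const_mul (11 / 35)).add (h2.const_mul (1 / 35))).add h3).sub
    (h4.const_mul 2)).sub h5).congr_deriv ?_
  simp only [Pi.div_apply, Pi.mul_apply, Pi.sub_apply]
  rw [logRatioDerivNum]
  set q := x * cosh x - sinh x with hq_def
  field_simp
  rw [hq_def]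
  ring

theorem strictMonoOn_ratio : StrictMonoOn ratio (Ioi 0) := by
  have hlog : StrictMonoOn logRatio (Ioi 0) := by
    refine strictMonoOn_of_deriv_pos (convex_Ioi 0)
      (fun t ht ↦ (hasDerivAt_logRatio ht).continuousAt.continuousWithinAt) fun t ht ↦ ?_
    rw [interior_Ioi] at ht
    rw [(hasDerivAt_logRatio ht).deriv]
    have hden : 0 < 35 * t * sinh t * cosh t * (t * cosh t - sinh t) :=
      mul_pos (mul_pos (mul_pos (mul_pos (by norm_num) ht) (sinh_pos_iff.2 ht)) (cosh_pos t))
        (mul_cosh_sub_sinh_pos ht)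
    exact div_pos (logRatioDerivNum_pos ht) hden
  intro a ha b hb hab
  rw [ratio_eq_exp_logRatio ha, ratio_eq_exp_logRatio hb]
  gcongr
  exact hlog ha hb hab

theorem hasDerivAt_G (x : ℝ) : HasDerivAt G (derivG x) x := by
  have hc := cosh_pos x
  refine ((hasDerivAt_cosh x).rpow_const (p := 34 / 35) (Or.inl hc.ne')).congr_deriv ?_
  have : cosh x ^ (34 / 35 - 1 : ℝ) * cosh x ^ (1 / 35 : ℝ) = 1 := by
    rw [← rpow_add hc]; norm_num
  rw [derivG, eq_div_iff (rpow_pos_of_pos hc _).ne', mul_assoc, this]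
  ring

theorem derivG_pos {x : ℝ} (hx : 0 < x) : 0 < derivG x := by
  have := sinh_pos_iff.2 hx
  have := rpow_pos_of_pos (cosh_pos x) (1 / 35)
  unfold derivG
  positivity

theorem hasDerivAt_F {x : ℝ} (hx : 0 < x) : HasDerivAt F (ratio x * derivG x) x := by
  have hs := sinh_pos_iff.2 hx
  have hsx := div_pos hs hx
  refine (((hasDerivAt_sinh x).div (hasDerivAt_id' x) hx.ne').rpow_const (p := 46 / 35)
    (Or.inl hsx.ne')).congr_deriv ?_
  have : (sinh x / x) ^ (46 / 35 - 1 : ℝ) = (sinh x / x) ^ (11 / 35 : ℝ) := by norm_num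
  simp only [Pi.div_apply]
  rw [this, ratio, derivG]
  field_simp
  ring

theorem lt_ratio {x : ℝ} (hx : 0 < x) : 23 / 51 < ratio x := by
  have hA : Tendsto (fun t ↦ sinh t / t) (𝓝[>] 0) (𝓝 1) :=
    tendsto_sinh_div_self.mono_left (nhdsGT_le_nhdsNE 0)
  have hC : Tendsto cosh (𝓝[>] 0) (𝓝 1) :=
    (continuous_cosh.tendsto' 0 1 cosh_zero).mono_left nhdsWithin_le_nhds
  refine strictMonoOn_ratio.lt_of_tendsto_nhdsGT_of_le (g := fun t ↦
    23 / 17 * (sinh t / t) ^ (11 / 35 : ℝ) * cosh t ^ (1 / 35 : ℝ) * ((sinh t / t)⁻¹ / 3)) ?_ ?_ hx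
  · convert ((((hA.rpow_const (p := 11 / 35) (Or.inl one_ne_zero)).const_mul (23 / 17)).mul
      (hC.rpow_const (p := 1 / 35) (Or.inl one_ne_zero))).mul
      ((hA.inv₀ one_ne_zero).div_const 3)) using 2
    norm_num
  · filter_upwards [self_mem_nhdsWithin] with t (ht : 0 < t)
    have hs := sinh_pos_iff.2 ht
    have hprefix : 0 < 23 / 17 * (sinh t / t) ^ (11 / 35 : ℝ) * cosh t ^ (1 / 35 : ℝ) :=
      mul_pos (mul_pos (by norm_num) (rpow_pos_of_pos (div_pos hs ht) _))
        (rpow_pos_of_pos (cosh_pos t) _)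
    have hcube : (sinh t / t)⁻¹ / 3 = t ^ 3 / 3 / (t ^ 2 * sinh t) := by
      field_simp
    rw [ratio, hcube]
    gcongr
    exact (cube_div_three_lt_mul_cosh_sub_sinh ht).le

theorem strictMonoOn_F_sub_G : StrictMonoOn (fun x ↦ F x - 23 / 51 * G x) (Ioi 0) := by
  have hderiv {t : ℝ} (ht : 0 < t) : HasDerivAt (fun x ↦ F x - 23 / 51 * G x)
      (ratio t * derivG t - 23 / 51 * derivG t) t :=
    (hasDerivAt_F ht).sub ((hasDerivAt_G t).const_mul (23 / 51))
  refine strictMonoOn_of_deriv_pos (convex_Ioi 0)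
    (fun t ht ↦ (hderiv ht).continuousAt.continuousWithinAt) fun t ht ↦ ?_
  rw [interior_Ioi] at ht
  rw [(hderiv ht).deriv]
  have := mul_pos (derivG_pos ht) (sub_pos.2 (lt_ratio ht))
  linarith

theorem tendsto_F_sub_G : Tendsto (fun x ↦ F x - 23 / 51 * G x) (𝓝[>] 0) (𝓝 (28 / 51)) := by
  have hA : Tendsto (fun t ↦ sinh t / t) (𝓝[>] 0) (𝓝 1) :=
    tendsto_sinh_div_self.mono_left (nhdsGT_le_nhdsNE 0)
  have hC : Tendsto cosh (𝓝[>] 0) (𝓝 1) :=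
    (continuous_cosh.tendsto' 0 1 cosh_zero).mono_left nhdsWithin_le_nhds
  simp only [F, G]
  convert (hA.rpow_const (p := 46 / 35) (Or.inl one_ne_zero)).sub
    ((hC.rpow_const (p := 34 / 35) (Or.inl one_ne_zero)).const_mul (23 / 51)) using 2
  norm_num

theorem add_mul_G_lt_F {x : ℝ} (hx : 0 < x) : 28 / 51 + 23 / 51 * G x < F x := by
  have := strictMonoOn_F_sub_G.lt_of_tendsto_nhdsGT_of_le tendsto_F_sub_G
    (Eventually.of_forall fun _ ↦ le_rfl) hx
  linarith

end SinhDivRpow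

theorem stmt_18 (x : ℝ) (hx : 0 < x) :
    Real.sinh x / x > (28 / 51 + (23 / 51) * (Real.cosh x) ^ ((34 : ℝ) / 35)) ^ ((35 : ℝ) / 46) := by
  have hsx : 0 < sinh x / x := div_pos (sinh_pos_iff.2 hx) hx
  calc (28 / 51 + 23 / 51 * cosh x ^ (34 / 35 : ℝ)) ^ (35 / 46 : ℝ)
      < ((sinh x / x) ^ (46 / 35 : ℝ)) ^ (35 / 46 : ℝ) :=
        rpow_lt_rpow (by positivity) (SinhDivRpow.add_mul_G_lt_F hx) (by norm_num)
    _ = sinh x / x := by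
        rw [← rpow_mul hsx.le]
        norm_num
end
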